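/- arXiv:2405.01595 — 9 statements merged into one kernel-verified Lean document; each statement's English description precedes it below -/
import Mathlib

section
/- Let k ≥ 1 and J ≥ 2 be integers. Let g be the affine isometry of Euclidean space ℝ^k given by g(x) = A·x + b, where A is a linear isometry (orthogonal transformation) of ℝ^k satisfying A^J = Id and b ∈ ℝ^k. Let r be a real number with 0 < r < √(2·sin(π/J)). If dist(g(x), x) < r for every point x with ‖x‖ ≤ 1/r, then A = Id, i.e. g is a translation. -/
/-!
Testing `g` at `x` and `-x` cancels the translation, so the linear part moves every point of the
ball of radius `1/r` by less than `r`, hence every unit vector by less than `r²`. On the other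
hand, if `A ≠ 1`, some eigenvector `u` of the symmetric operator `A + A⁻¹` is moved by `A`; on the
plane spanned by `u` and `A u` the map `A` is a rotation by an angle `θ ∈ (0, π]`, so
`⟪Aⁿ u, u⟫ = cos (n θ)`. Then `A ^ J = 1` forces `θ ≥ 2π/J`, i.e. `‖A u - u‖ ≥ 2 sin (π/J) > r²`.
-/

open Real RealInnerProductSpace

theorem Real.two_pi_div_le_of_cos_mul_eq_one {θ : ℝ} (hθ : 0 < θ) {J : ℕ}
    (h : cos (J * θ) = 1) : 2 * π / J ≤ θ := by
  rcases J.eq_zero_or_pos with rfl | hJ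
  · simpa using hθ.le
  obtain ⟨m, hm⟩ := (cos_eq_one_iff _).mp h
  have hm0 : (0 : ℝ) < m := by
    by_contra! hm0
    nlinarith [pi_pos, (Nat.cast_pos.mpr hJ : (0 : ℝ) < J)]
  have hm1 : (1 : ℝ) ≤ m := by exact_mod_cast (by exact_mod_cast hm0 : (0 : ℤ) < m)
  rw [div_le_iff₀ (by positivity)]
  nlinarith [pi_pos]

namespace LinearIsometryEquiv

variable {E : Type*} [NormedAddCommGroup E] [InnerProductSpace ℝ E] (A : E ≃ₗᵢ[ℝ] E)

theorem norm_map_sub_self_sq (u : E) : ‖A u - u‖ ^ 2 = 2 * ‖u‖ ^ 2 - 2 * ⟪A u, u⟫ := by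
  rw [norm_sub_sq_real, A.norm_map]
  ring

theorem inner_map_self_eq_of_map_map_add_self {u : E} {c : ℝ}
    (h : A (A u) + u = (2 * c) • A u) : ⟪A u, u⟫ = c * ‖u‖ ^ 2 := by
  have := congrArg (⟪·, A u⟫) h
  simp only [inner_add_left, inner_smul_left, A.inner_map_map, real_inner_self_eq_norm_sq,
    RCLike.conj_to_real] at this
  linarith [real_inner_comm (A u) u]

theorem inner_pow_apply_self_eq_cos {u : E} {θ : ℝ} (h : A (A u) + u = (2 * cos θ) • A u)
    (n : ℕ) : ⟪(A ^ n) u, u⟫ = cos (n * θ) * ‖u‖ ^ 2 := by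
  induction n using Nat.twoStepInduction with
  | zero => simp
  | one => simpa using A.inner_map_self_eq_of_map_map_add_self h
  | more n ih₀ ih₁ =>
    have hrec : (A ^ (n + 2)) u + (A ^ n) u = (2 * cos θ) • (A ^ (n + 1)) u := by
      simp only [pow_add, pow_one, sq, coe_mul, Function.comp_apply, ← map_add, h, map_smul]
    have hcos : cos ((n + 2 : ℕ) * θ) + cos (n * θ) = 2 * cos θ * cos ((n + 1 : ℕ) * θ) := by
      have e₁ : ((n + 2 : ℕ) : ℝ) * θ = (n + 1 : ℕ) * θ + θ := by push_cast; ring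
      have e₀ : (n : ℝ) * θ = (n + 1 : ℕ) * θ - θ := by push_cast; ring
      rw [e₁, e₀, cos_add, cos_sub]
      ring
    have := congrArg (⟪·, u⟫) hrec
    simp only [inner_add_left, inner_smul_left, RCLike.conj_to_real, ih₀, ih₁] at this
    linear_combination this - ‖u‖ ^ 2 * hcos

theorem exists_map_map_add_self_eq_smul [FiniteDimensional ℝ E] (hA : A ≠ 1) :
    ∃ (u : E) (c : ℝ), ‖u‖ = 1 ∧ A u ≠ u ∧ A (A u) + u = (2 * c) • A u := by
  let S : E →ₗ[ℝ] E := A.toLinearMap + A.symm.toLinearMap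
  have hS : S.IsSymmetric := fun x y => by
    simp only [S, LinearMap.add_apply, LinearEquiv.coe_coe, coe_toLinearEquiv, inner_add_left,
      inner_add_right, A.inner_map_eq_flip, A.symm.inner_map_eq_flip, symm_symm]
    ring
  -- If `A` fixed an orthonormal eigenbasis of `A + A⁻¹`, it would be the identity.
  by_contra! hfix
  let b := hS.eigenvectorBasis rfl
  refine hA (toLinearEquiv_injective (b.toBasis.ext' fun i => ?_))
  simp only [coe_toLinearEquiv, OrthonormalBasis.coe_toBasis, coe_one, id]
  by_contra hne
  refine hfix _ (hS.eigenvalues rfl i / 2) (b.orthonormal.1 i) hne ?_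
  have := congrArg A (hS.apply_eigenvectorBasis rfl i)
  simp only [S, LinearMap.add_apply, LinearEquiv.coe_coe, coe_toLinearEquiv, map_add,
    apply_symm_apply, map_smul] at this
  rwa [mul_div_cancel₀ _ two_ne_zero]

theorem exists_norm_eq_one_inner_map_self_le [FiniteDimensional ℝ E] {J : ℕ} (hAJ : A ^ J = 1)
    (hA : A ≠ 1) : ∃ u, ‖u‖ = 1 ∧ ⟪A u, u⟫ ≤ cos (2 * π / J) := by
  obtain ⟨u, c, hu1, hmoved, h⟩ := A.exists_map_map_add_self_eq_smul hA
  have hc := A.inner_map_self_eq_of_map_map_add_self h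
  rw [hu1, one_pow, mul_one] at hc
  have hc_lt : c < 1 := by
    have := A.norm_map_sub_self_sq u
    rw [hc, hu1] at this
    nlinarith [norm_pos_iff.mpr (sub_ne_zero.mpr hmoved)]
  have hc_ge : -1 ≤ c := by
    have := neg_le_of_abs_le (abs_real_inner_le_norm (A u) u)
    rwa [hc, A.norm_map, hu1, mul_one] at this
  rw [← cos_arccos hc_ge hc_lt.le] at h hc
  have hJθ : cos (J * arccos c) = 1 := by
    simpa [hAJ, real_inner_self_eq_norm_sq, hu1] using (A.inner_pow_apply_self_eq_cos h J).symm
  refine ⟨u, hu1, hc.trans_le (cos_le_cos_of_nonneg_of_le_pi (by positivity) (arccos_le_pi c)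
    (two_pi_div_le_of_cos_mul_eq_one (arccos_pos.mpr hc_lt) hJθ))⟩

theorem exists_norm_eq_one_two_mul_sin_le [FiniteDimensional ℝ E] {J : ℕ} (hAJ : A ^ J = 1)
    (hA : A ≠ 1) : ∃ u, ‖u‖ = 1 ∧ 2 * sin (π / J) ≤ ‖A u - u‖ := by
  obtain ⟨u, hu1, hu⟩ := A.exists_norm_eq_one_inner_map_self_le hAJ hA
  refine ⟨u, hu1, le_of_sq_le_sq ?_ (norm_nonneg _)⟩
  have hcos : cos (2 * π / J) = 1 - 2 * sin (π / J) ^ 2 := by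
    rw [mul_div_assoc, cos_two_mul, cos_sq']
    ring
  rw [A.norm_map_sub_self_sq, hu1]
  nlinarith

end LinearIsometryEquiv

theorem norm_map_sub_self_lt_of_dist_lt {E F : Type*} [NormedAddCommGroup E] [NormedSpace ℝ E]
    [FunLike F E E] [AddMonoidHomClass F E E] (A : F) (b : E) {x : E} {r : ℝ}
    (h₁ : dist (A x + b) x < r) (h₂ : dist (A (-x) + b) (-x) < r) : ‖A x - x‖ < r := by
  rw [dist_eq_norm] at h₁ h₂
  have key : (A x + b - x) - (A (-x) + b - -x) = (2 : ℝ) • (A x - x) := by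
    rw [map_neg]; module
  have := norm_sub_le (A x + b - x) (A (-x) + b - -x)
  rw [key, norm_smul, Real.norm_two] at this
  linarith

theorem stmt_0_general (k J : ℕ)
    (A : EuclideanSpace ℝ (Fin k) ≃ₗᵢ[ℝ] EuclideanSpace ℝ (Fin k))
    (hAJ : A ^ J = 1)
    (b : EuclideanSpace ℝ (Fin k)) (r : ℝ)
    (hr0 : 0 < r) (hr : r < Real.sqrt (2 * Real.sin (Real.pi / J)))
    (hmove : ∀ x : EuclideanSpace ℝ (Fin k), ‖x‖ ≤ 1 / r → dist (A x + b) x < r) :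
    A = 1 := by
  by_contra hA
  obtain ⟨u, hu1, hu⟩ := A.exists_norm_eq_one_two_mul_sin_le hAJ hA
  have hx : ‖r⁻¹ • u‖ ≤ 1 / r := by
    rw [norm_smul, hu1, norm_inv, Real.norm_of_nonneg hr0.le, one_div, mul_one]
  have hdisp := norm_map_sub_self_lt_of_dist_lt A b (hmove _ hx) (hmove _ (by rwa [norm_neg]))
  rw [map_smul, ← smul_sub, norm_smul, norm_inv, Real.norm_of_nonneg hr0.le,
    inv_mul_lt_iff₀ hr0] at hdisp
  have hr2 := (Real.lt_sqrt hr0.le).mp hr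
  linarith

/-- Let `k ≥ 1`, `J ≥ 2` be integers, `A` an orthogonal transformation
(linear isometry equivalence) of `ℝ^k` with `A^J = Id`, `b ∈ ℝ^k`, and let
`g : x ↦ A x + b`. If `0 < r < √(2 sin (π/J))` and `dist (g x) x < r` for all `x` with
`‖x‖ ≤ 1/r`, then `A = Id`, i.e. `g` is a translation. -/
theorem stmt_0 (k J : ℕ) (hk : 1 ≤ k) (hJ : 2 ≤ J)
    (A : EuclideanSpace ℝ (Fin k) ≃ₗᵢ[ℝ] EuclideanSpace ℝ (Fin k))
    (hAJ : A ^ J = 1)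
    (b : EuclideanSpace ℝ (Fin k)) (r : ℝ)
    (hr0 : 0 < r) (hr : r < Real.sqrt (2 * Real.sin (Real.pi / J)))
    (hmove : ∀ x : EuclideanSpace ℝ (Fin k), ‖x‖ ≤ 1 / r → dist (A x + b) x < r) :
    A = 1 :=
  stmt_0_general k J A hAJ b r hr0 hr hmove
end

section
/- Let A be a closed additive subgroup of Euclidean space ℝ^k. Then there exist natural numbers ℓ and d with ℓ + d ≤ k and an isomorphism of topological groups between A and ℝ^ℓ × ℤ^d. Moreover, the identity component of A equals the additive group of an ℓ-dimensional linear subspace V of ℝ^k, and A = V + D where D := A ∩ V^⊥ is a discrete subgroup of ℝ^k contained in the orthogonal complement V^⊥ of V. -/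
/-!
Let `V` be the set of vectors whose whole line lies in `A`; it is a subspace contained in `A`.
Orthogonal projection onto `V` splits `A` topologically as `V × (A ∩ Vᗮ)`. The closed subgroup
`A ∩ Vᗮ` contains no line, hence is discrete: otherwise its nonzero elements `x` tending to `0`
have directions `x / ‖x‖` accumulating, by compactness of the sphere, at a unit vector `c`, and
the multiples `⌊t / ‖x‖⌋ • x` converge to `t • c`, so the line through `c` lies in `A ∩ Vᗮ`.
A discrete subgroup of `Vᗮ` is a free abelian group of rank at most `dim Vᗮ`. Finally the
identity component of `A` is `V`: `V` is connected, and the projection to the discrete factor is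
constant on connected sets.
-/

open Filter Topology Module Submodule

namespace ContinuousAddEquiv

variable {G H G' H' : Type*} [TopologicalSpace G] [TopologicalSpace H] [TopologicalSpace G']
  [TopologicalSpace H'] [AddZeroClass G] [AddZeroClass H] [AddZeroClass G'] [AddZeroClass H']

def prodCongr (e : G ≃ₜ+ G') (e' : H ≃ₜ+ H') : G × H ≃ₜ+ G' × H' where
  toAddEquiv := e.toAddEquiv.prodCongr e'.toAddEquiv
  continuous_toFun := (map_continuous e).prodMap (map_continuous e')
  continuous_invFun := (map_continuous e.symm).prodMap (map_continuous e'.symm)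

end ContinuousAddEquiv

theorem tendsto_floor_div_mul_self {ι : Type*} {l : Filter ι} {r : ι → ℝ}
    (hr : Tendsto r l (𝓝 0)) (hr0 : ∀ i, r i ≠ 0) (t : ℝ) :
    Tendsto (fun i ↦ (⌊t / r i⌋ : ℝ) * r i) l (𝓝 t) := by
  have hdist : ∀ i, ‖(⌊t / r i⌋ : ℝ) * r i - t‖ ≤ ‖r i‖ := fun i ↦ by
    have ht : t = t / r i * r i := (div_mul_cancel₀ t (hr0 i)).symm
    calc ‖(⌊t / r i⌋ : ℝ) * r i - t‖ = |Int.fract (t / r i)| * ‖r i‖ := by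
          rw [← Int.self_sub_floor, Real.norm_eq_abs, Real.norm_eq_abs, ← abs_mul]
          nth_rewrite 2 [ht]
          rw [← abs_neg]
          ring_nf
      _ ≤ 1 * ‖r i‖ := by
          gcongr
          rw [abs_of_nonneg (Int.fract_nonneg _)]
          exact (Int.fract_lt_one _).le
      _ = ‖r i‖ := one_mul _
  exact tendsto_iff_norm_sub_tendsto_zero.mpr
    (squeeze_zero_norm (fun i ↦ by simpa using hdist i)
      (tendsto_zero_iff_norm_tendsto_zero.mp hr))

namespace AddSubgroup

variable {E : Type*}

section Module

variable [AddCommGroup E] [Module ℝ E] (A : AddSubgroup E)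

/-- The largest real subspace contained in `A`. -/
def lineSubmodule : Submodule ℝ E where
  carrier := {v | ∀ t : ℝ, t • v ∈ A}
  add_mem' hu hv t := by simpa only [smul_add] using A.add_mem (hu t) (hv t)
  zero_mem' t := by simpa only [smul_zero] using A.zero_mem
  smul_mem' c _ hv t := by simpa only [smul_smul] using hv (t * c)

theorem lineSubmodule_le : A.lineSubmodule.toAddSubgroup ≤ A :=
  fun v hv ↦ by simpa only [one_smul] using hv 1

theorem lineSubmodule_mono {A B : AddSubgroup E} (h : A ≤ B) :
    A.lineSubmodule ≤ B.lineSubmodule :=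
  fun _ hv t ↦ h (hv t)

end Module

section Normed

variable [NormedAddCommGroup E] [NormedSpace ℝ E] {A : AddSubgroup E}

theorem mem_lineSubmodule_of_tendsto {ι : Type*} {l : Filter ι} [l.NeBot]
    (hA : IsClosed (A : Set E)) {x : ι → E} {c : E} (hxA : ∀ i, x i ∈ A) (hx0 : ∀ i, x i ≠ 0)
    (hx : Tendsto x l (𝓝 0)) (hc : Tendsto (fun i ↦ ‖x i‖⁻¹ • x i) l (𝓝 c)) :
    c ∈ A.lineSubmodule := by
  intro t
  have hnorm : Tendsto (‖x ·‖) l (𝓝 0) := tendsto_zero_iff_norm_tendsto_zero.mp hx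
  have hscalar := tendsto_floor_div_mul_self hnorm (fun i ↦ norm_ne_zero_iff.mpr (hx0 i)) t
  refine hA.mem_of_tendsto (hscalar.smul hc) (Eventually.of_forall fun i ↦ ?_)
  have hmul : ((⌊t / ‖x i‖⌋ : ℝ) * ‖x i‖) • ‖x i‖⁻¹ • x i = ⌊t / ‖x i‖⌋ • x i := by
    rw [smul_smul, mul_assoc, mul_inv_cancel₀ (norm_ne_zero_iff.mpr (hx0 i)), mul_one,
      Int.cast_smul_eq_zsmul]
  rw [hmul]
  exact A.zsmul_mem (hxA i) _

variable [FiniteDimensional ℝ E]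

theorem exists_pos_forall_norm_lt_eq_zero (hA : IsClosed (A : Set E))
    (hV : A.lineSubmodule = ⊥) : ∃ ε > 0, ∀ x ∈ A, ‖x‖ < ε → x = 0 := by
  by_contra! h
  choose x hxA hxε hx0 using fun n : ℕ ↦ h (1 / (n + 1)) Nat.one_div_pos_of_nat
  have hsphere : ∀ n, ‖x n‖⁻¹ • x n ∈ Metric.sphere (0 : E) 1 := fun n ↦ by
    simp [norm_smul, hx0 n]
  obtain ⟨c, hc, φ, hφ, hlim⟩ := (isCompact_sphere (0 : E) 1).tendsto_subseq hsphere
  have hx : Tendsto x atTop (𝓝 0) :=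
    squeeze_zero_norm (fun n ↦ (hxε n).le) tendsto_one_div_add_atTop_nhds_zero_nat
  have hcV : c ∈ A.lineSubmodule :=
    mem_lineSubmodule_of_tendsto hA (fun n ↦ hxA (φ n)) (fun n ↦ hx0 (φ n))
      (hx.comp hφ.tendsto_atTop) hlim
  rw [hV, Submodule.mem_bot] at hcV
  simp [hcV] at hc

theorem discreteTopology_of_lineSubmodule_eq_bot (hA : IsClosed (A : Set E))
    (hV : A.lineSubmodule = ⊥) : DiscreteTopology A := by
  obtain ⟨ε, hε, hsmall⟩ := exists_pos_forall_norm_lt_eq_zero hA hV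
  rw [discreteTopology_iff_isOpen_singleton_zero]
  convert (Metric.isOpen_ball (x := (0 : E)) (ε := ε)).preimage continuous_subtype_val
  ext x
  simp only [Set.mem_singleton_iff, Set.mem_preimage, mem_ball_zero_iff]
  exact ⟨fun hx ↦ by simpa [hx] using hε, fun hx ↦ Subtype.ext (hsmall x x.2 hx)⟩

theorem exists_continuousAddEquiv_of_discreteTopology (D : AddSubgroup E) [DiscreteTopology D]
    {W : Submodule ℝ E} (hDW : D ≤ W.toAddSubgroup) :
    ∃ d ≤ finrank ℝ W, Nonempty (D ≃ₜ+ (Fin d → ℤ)) := by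
  let L := D.toIntSubmodule
  have : DiscreteTopology L := ‹DiscreteTopology D›
  have hspan : span ℤ (L : Set E) = L := span_eq L
  refine ⟨finrank ℤ L, ?_, ⟨((AddEquiv.refl D).trans
    (Module.finBasis ℤ L).equivFun.toAddEquiv).toContinuousAddEquiv fun s ↦ ?_⟩⟩
  · calc finrank ℤ L = Set.finrank ℝ (L : Set E) := by
          rw [Real.finrank_eq_int_finrank_of_discrete (by rwa [hspan]), Set.finrank, hspan]
      _ ≤ finrank ℝ W := Submodule.finrank_mono (span_le.mpr hDW)
  · simp only [isOpen_discrete]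

end Normed

section InnerProduct

variable [NormedAddCommGroup E] [InnerProductSpace ℝ E] (A : AddSubgroup E)

theorem lineSubmodule_inf_orthogonal_eq_bot :
    (A ⊓ A.lineSubmoduleᗮ.toAddSubgroup).lineSubmodule = ⊥ := by
  refine eq_bot_iff.mpr fun x hx ↦ ?_
  rw [← A.lineSubmodule.inf_orthogonal_eq_bot]
  exact ⟨lineSubmodule_mono inf_le_left hx, (lineSubmodule_le _ hx).2⟩

variable {A} {V : Submodule ℝ E} [V.HasOrthogonalProjection]

theorem sup_inf_orthogonal_eq (hVA : V.toAddSubgroup ≤ A) :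
    V.toAddSubgroup ⊔ (A ⊓ Vᗮ.toAddSubgroup) = A := by
  rw [inf_comm, ← sup_inf_assoc_of_le _ hVA, ← sup_toAddSubgroup,
    sup_orthogonal_of_hasOrthogonalProjection, top_toAddSubgroup, top_inf_eq]

noncomputable def equivProdInfOrthogonal (hVA : V.toAddSubgroup ≤ A) :
    A ≃ₜ+ V × ↥(A ⊓ Vᗮ.toAddSubgroup) where
  toFun a := (V.orthogonalProjectionOnto a, ⟨a - V.starProjection a,
    A.sub_mem a.2 (hVA (V.starProjection_apply_mem a)), V.sub_starProjection_mem_orthogonal a⟩)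
  invFun p := ⟨p.1 + p.2, A.add_mem (hVA p.1.2) p.2.2.1⟩
  left_inv a := by ext; simp
  right_inv p := by
    have hp : V.orthogonalProjectionOnto (p.1 + p.2 : E) = p.1 := by
      rw [map_add, orthogonalProjectionOnto_mem_subspace_eq_self,
        orthogonalProjectionOnto_apply_of_mem_orthogonal p.2.2.2, add_zero]
    refine Prod.ext hp (Subtype.ext ?_)
    simp [(V.starProjection_apply_eq_zero_iff).mpr p.2.2.2]
  map_add' a b := by
    refine Prod.ext (map_add _ _ _) (Subtype.ext ?_)
    simp only [AddSubgroup.coe_add, map_add, Prod.snd_add]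
    abel
  continuous_toFun := by fun_prop
  continuous_invFun := by fun_prop

theorem image_val_connectedComponent_zero (hVA : V.toAddSubgroup ≤ A)
    [DiscreteTopology ↥(A ⊓ Vᗮ.toAddSubgroup)] :
    Subtype.val '' connectedComponent (0 : A) = (V : Set E) := by
  apply subset_antisymm
  · rintro _ ⟨a, ha, rfl⟩
    let e := equivProdInfOrthogonal hVA
    have hsnd : (e a).2 = 0 := by
      have h := (continuous_snd.comp (map_continuous e)).image_connectedComponent_eq_singleton
      simpa using (h 0).subset ⟨a, ha, rfl⟩
    have hproj : (a : E) - V.starProjection a = 0 := congrArg Subtype.val hsnd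
    rw [SetLike.mem_coe, sub_eq_zero.mp hproj]
    exact V.starProjection_apply_mem a
  · intro v hv
    let incl : V → A := fun w ↦ ⟨w, hVA w.2⟩
    have hincl : Continuous incl := by fun_prop
    have hsub := (isPreconnected_range hincl).subset_connectedComponent (x := 0) ⟨0, rfl⟩
    exact ⟨incl ⟨v, hv⟩, hsub ⟨⟨v, hv⟩, rfl⟩, rfl⟩

end InnerProduct

end AddSubgroup

/-- A closed additive subgroup `A` of `ℝ^k` is isomorphic, as a topological
group, to `ℝ^ℓ × ℤ^d` with `ℓ + d ≤ k`. Moreover, the identity component of `A` equals an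
`ℓ`-dimensional linear subspace `V` of `ℝ^k`, and `A = V + D` where `D := A ∩ V^⊥` is a
discrete subgroup contained in the orthogonal complement of `V`. -/
theorem stmt_2 (k : ℕ) (A : AddSubgroup (EuclideanSpace ℝ (Fin k)))
    (hA : IsClosed (A : Set (EuclideanSpace ℝ (Fin k)))) :
    ∃ (ℓ d : ℕ), ℓ + d ≤ k ∧
      ∃ V : Submodule ℝ (EuclideanSpace ℝ (Fin k)),
        Module.finrank ℝ V = ℓ ∧
        (∃ e : A ≃+ (EuclideanSpace ℝ (Fin ℓ) × (Fin d → ℤ)),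
          Continuous e ∧ Continuous e.symm) ∧
        Subtype.val '' connectedComponent (0 : A) = (V : Set (EuclideanSpace ℝ (Fin k))) ∧
        DiscreteTopology ↥(A ⊓ Vᗮ.toAddSubgroup) ∧
        A = V.toAddSubgroup ⊔ (A ⊓ Vᗮ.toAddSubgroup) := by
  set V := A.lineSubmodule
  have hVA : V.toAddSubgroup ≤ A := A.lineSubmodule_le
  have hD : DiscreteTopology ↥(A ⊓ Vᗮ.toAddSubgroup) :=
    AddSubgroup.discreteTopology_of_lineSubmodule_eq_bot (hA.inter V.isClosed_orthogonal)
      A.lineSubmodule_inf_orthogonal_eq_bot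
  obtain ⟨d, hd, ⟨eD⟩⟩ :=
    AddSubgroup.exists_continuousAddEquiv_of_discreteTopology (W := Vᗮ) (A ⊓ Vᗮ.toAddSubgroup)
      inf_le_right
  have hdim := V.finrank_add_finrank_orthogonal
  rw [finrank_euclideanSpace_fin] at hdim
  let eV : V ≃ₜ+ EuclideanSpace ℝ (Fin (finrank ℝ V)) :=
    (stdOrthonormalBasis ℝ V).repr.toContinuousLinearEquiv.toContinuousAddEquiv
  let e := (AddSubgroup.equivProdInfOrthogonal hVA).trans (eV.prodCongr eD)
  exact ⟨finrank ℝ V, d, by omega, V, rfl,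
    ⟨e.toAddEquiv, map_continuous e, map_continuous e.symm⟩,
    AddSubgroup.image_val_connectedComponent_zero hVA, hD,
    (AddSubgroup.sup_inf_orthogonal_eq hVA).symm⟩
end

section
/- Let X be a metric space and G a group acting on X by isometries such that for every x ∈ X and every R > 0 the set Σ̄_R(G,x) := {g ∈ G : dist(x, g·x) ≤ R} is finite. Then for every x ∈ X and every r > 0 there exists an open neighborhood U of x such that Σ̄_r(G,y) ⊆ Σ̄_r(G,x) for every y ∈ U. -/
/-! The triangle inequality gives `Σ̄_r(G,y) ⊆ Σ̄_{r + 2 dist(x,y)}(G,x)`. Since `Σ̄_{r+1}(G,x)` is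
finite, only finitely many displacements `dist(x, g·x)` lie in `(r, r+1]`, so `Σ̄_s(G,x) = Σ̄_r(G,x)`
for some `s > r`; the ball of radius `(s - r)/2` about `x` works. -/

open Filter Topology

theorem exists_gt_setOf_le_subset {α : Type*} (f : α → ℝ) {r R : ℝ} (hrR : r < R)
    (hfin : {a | f a ≤ R}.Finite) : ∃ s > r, {a | f a ≤ s} ⊆ {a | f a ≤ r} := by
  have hnear : ∀ᶠ s in 𝓝 r, s < R ∧ ∀ a ∈ {a | f a ≤ R}, r < f a → s < f a :=
    (eventually_lt_nhds hrR).and <|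
      hfin.eventually_all.2 fun _ _ ↦ eventually_imp_distrib_left.2 eventually_lt_nhds
  obtain ⟨s, ⟨hsR, hbelow⟩, hrs⟩ :=
    ((hnear.filter_mono nhdsWithin_le_nhds).and (self_mem_nhdsWithin (s := Set.Ioi r))).exists
  exact ⟨s, hrs, fun a ha ↦ le_of_not_gt fun hra ↦ (hbelow a (ha.trans hsR.le) hra).not_ge ha⟩

theorem dist_smul_self_le {X G : Type*} [PseudoMetricSpace X] [SMul G X] [IsIsometricSMul G X]
    (x y : X) (g : G) : dist x (g • x) ≤ dist y (g • y) + 2 * dist x y := by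
  calc dist x (g • x) ≤ dist x y + dist y (g • y) + dist (g • y) (g • x) :=
        dist_triangle4 x y (g • y) (g • x)
    _ = dist y (g • y) + 2 * dist x y := by rw [dist_smul, dist_comm y x]; ring

/-- Let `G` act by isometries on a metric space `X` such that the sets
`Σ̄_R(G,x) = {g : dist x (g • x) ≤ R}` are finite for every `x` and every `R > 0`.
Then for every `x` and `r > 0` there is an open neighborhood `U` of `x` such that
`Σ̄_r(G,y) ⊆ Σ̄_r(G,x)` for every `y ∈ U`. -/
theorem stmt_3 {X G : Type*} [MetricSpace X] [Group G] [MulAction G X] [IsIsometricSMul G X]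
    (hfin : ∀ (x : X) (R : ℝ), 0 < R → {g : G | dist x (g • x) ≤ R}.Finite) :
    ∀ (x : X) (r : ℝ), 0 < r → ∃ U : Set X, IsOpen U ∧ x ∈ U ∧
      ∀ y ∈ U, {g : G | dist y (g • y) ≤ r} ⊆ {g : G | dist x (g • x) ≤ r} := by
  intro x r hr
  obtain ⟨s, hrs, hstable⟩ := exists_gt_setOf_le_subset (fun g : G ↦ dist x (g • x))
    (lt_add_one r) (hfin x (r + 1) (by linarith))
  refine ⟨Metric.ball x ((s - r) / 2), Metric.isOpen_ball, Metric.mem_ball_self (by linarith),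
    fun y hy g hg ↦ hstable ?_⟩
  have hxy : dist x y < (s - r) / 2 := by rwa [Metric.mem_ball, dist_comm] at hy
  show dist x (g • x) ≤ s
  linarith [dist_smul_self_le x y g, hg.out]
end

section
/- Let X be a proper metric space, G a group acting on X by isometries, x₀ ∈ X and D ≥ 0 such that every point of X lies at distance at most D from the orbit G·x₀. Then for every r₀ > 0 there exists P₀ ∈ ℕ such that every closed ball of radius 3r₀ in X contains at most P₀ points which are pairwise at distance greater than 2r₀ (i.e. X is (P₀, r₀)-packed). -/
/-!
An isometry `g` with `g⁻¹ • x` within `D` of `x₀` moves the ball `closedBall x (3 r₀)` into the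
compact ball `closedBall x₀ (3 r₀ + D)`, so packing numbers of balls of radius `3 r₀` are bounded by
the packing number of one compact set, which is at most the size of a finite `r₀`-cover of it.
-/

open Metric NNReal

namespace Metric

lemma packingNumber_ne_top_of_totallyBounded {X : Type*} [PseudoEMetricSpace X] {A : Set X}
    (hA : TotallyBounded A) {ε : ℝ≥0} (hε : ε ≠ 0) : packingNumber ε A ≠ ⊤ := by
  obtain ⟨N, -, hN_fin, hN⟩ := exists_finite_isCover_of_totallyBounded (half_pos hε.bot_lt).ne' hA
  refine ne_top_of_le_ne_top hN_fin.encard_lt_top.ne ?_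
  calc packingNumber ε A = packingNumber (2 * (ε / 2)) A := by rw [mul_div_cancel₀ _ two_ne_zero]
    _ ≤ externalCoveringNumber (ε / 2) A := packingNumber_two_mul_le_externalCoveringNumber _ _
    _ ≤ N.encard := hN.externalCoveringNumber_le_encard

lemma _root_.Isometry.packingNumber_le_of_mapsTo {X Y : Type*} [EMetricSpace X]
    [PseudoEMetricSpace Y] {f : X → Y} (hf : Isometry f) {A : Set X} {B : Set Y}
    (hAB : Set.MapsTo f A B) (ε : ℝ≥0) : packingNumber ε A ≤ packingNumber ε B := by
  refine iSup₂_le fun C hCA => iSup_le fun hC => ?_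
  have hfC : IsSeparated ε (f '' C) := by
    rintro _ ⟨x, hx, rfl⟩ _ ⟨y, hy, rfl⟩ hxy
    rw [hf.edist_eq]
    exact hC hx hy (ne_of_apply_ne f hxy)
  rw [← hf.injective.encard_image]
  exact hfC.encard_le_packingNumber ((Set.image_mono hCA).trans hAB.image_subset)

end Metric

section CocompactAction

variable {X G : Type*} [MetricSpace X] [Group G] [MulAction G X] [IsIsometricSMul G X]
  {x₀ : X} {D : ℝ}

lemma exists_smul_mapsTo_closedBall_of_forall_dist_orbit_le
    (hcoc : ∀ y : X, ∃ g : G, dist y (g • x₀) ≤ D) (x : X) (R : ℝ) :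
    ∃ g : G, Set.MapsTo (g • ·) (closedBall x R) (closedBall x₀ (R + D)) := by
  obtain ⟨g, hg⟩ := hcoc x
  refine ⟨g⁻¹, fun y hy => ?_⟩
  rw [mem_closedBall, ← dist_smul g, smul_inv_smul]
  calc dist y (g • x₀) ≤ dist y x + dist x (g • x₀) := dist_triangle _ _ _
    _ ≤ R + D := add_le_add hy hg

lemma packingNumber_closedBall_le_of_forall_dist_orbit_le
    (hcoc : ∀ y : X, ∃ g : G, dist y (g • x₀) ≤ D) (x : X) (R : ℝ) (ε : ℝ≥0) :
    packingNumber ε (closedBall x R) ≤ packingNumber ε (closedBall x₀ (R + D)) := by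
  obtain ⟨g, hg⟩ := exists_smul_mapsTo_closedBall_of_forall_dist_orbit_le hcoc x R
  exact (isometry_smul X g).packingNumber_le_of_mapsTo hg ε

end CocompactAction

theorem stmt_4_general {X G : Type*} [MetricSpace X] [ProperSpace X]
    [Group G] [MulAction G X] [IsIsometricSMul G X]
    (x₀ : X) (D : ℝ)
    (hcoc : ∀ y : X, ∃ g : G, dist y (g • x₀) ≤ D) :
    ∀ r₀ : ℝ, 0 < r₀ → ∃ P₀ : ℕ,
      ∀ (x : X) (s : Finset X), (∀ y ∈ s, y ∈ Metric.closedBall x (3 * r₀)) →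
        (∀ y ∈ s, ∀ z ∈ s, y ≠ z → 2 * r₀ < dist y z) → s.card ≤ P₀ := by
  intro r₀ hr₀
  set ε := (2 * r₀).toNNReal
  have hfin : packingNumber ε (closedBall x₀ (3 * r₀ + D)) ≠ ⊤ :=
    packingNumber_ne_top_of_totallyBounded (isCompact_closedBall _ _).totallyBounded
      (by positivity)
  refine ⟨(packingNumber ε (closedBall x₀ (3 * r₀ + D))).toNat, fun x s hs hsep => ?_⟩
  have hs_sep : IsSeparated ε (s : Set X) := fun y hy z hz hyz => by
    show ENNReal.ofReal (2 * r₀) < edist y z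
    rw [edist_dist]
    exact (ENNReal.ofReal_lt_ofReal_iff_of_nonneg (by positivity)).2 (hsep y hy z hz hyz)
  have hcard : (s.card : ℕ∞) ≤ packingNumber ε (closedBall x₀ (3 * r₀ + D)) := by
    rw [← Set.encard_coe_eq_coe_finsetCard]
    exact (hs_sep.encard_le_packingNumber hs).trans
      (packingNumber_closedBall_le_of_forall_dist_orbit_le hcoc x _ ε)
  simpa using ENat.toNat_le_toNat hcard hfin

/-- Let `X` be a proper metric space and `G` a group acting on `X` by
isometries, cocompactly: every point of `X` is at distance at most `D` from the orbit
`G • x₀`. Then for every `r₀ > 0` there is `P₀ ∈ ℕ` such that every closed ball of radius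
`3r₀` contains at most `P₀` points which are pairwise at distance greater than `2r₀`,
i.e. `X` is `(P₀, r₀)`-packed. -/
theorem stmt_4 {X G : Type*} [MetricSpace X] [ProperSpace X]
    [Group G] [MulAction G X] [IsIsometricSMul G X]
    (x₀ : X) (D : ℝ) (hD : 0 ≤ D)
    (hcoc : ∀ y : X, ∃ g : G, dist y (g • x₀) ≤ D) :
    ∀ r₀ : ℝ, 0 < r₀ → ∃ P₀ : ℕ,
      ∀ (x : X) (s : Finset X), (∀ y ∈ s, y ∈ Metric.closedBall x (3 * r₀)) →
        (∀ y ∈ s, ∀ z ∈ s, y ≠ z → 2 * r₀ < dist y z) → s.card ≤ P₀ :=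
  stmt_4_general x₀ D hcoc
end

section
/- Let X and X' be metric spaces, Γ a group acting by isometries on X, Γ' a group acting by isometries on X', and x ∈ X, x' ∈ X' basepoints. Let s₀ > 0 satisfy dist(x', g'·x') ≥ s₀ for every g' ∈ Γ' with g' ≠ 1. Let ε > 0 with 3ε ≤ s₀, let L > 0 with 3L ≤ 1/ε, set R := 1/ε. Suppose f : X → X' satisfies f(x) = x', and φ : Σ̄_R(Γ,x) → Σ̄_R(Γ',x') satisfies dist(f(g·y), φ(g)·f(y)) < ε for every g ∈ Σ̄_R(Γ,x) and every y ∈ B̄(x,R) with g·y ∈ B̄(x,R). Then for all s₁, s₂, s₃ ∈ Σ̄_L(Γ,x) one has φ(s₁·s₂·s₃) = φ(s₁)·φ(s₂)·φ(s₃) (all the elements s₁·s₂·s₃, s₂·s₃, s₁, s₂, s₃ lie in Σ̄_R(Γ,x) since 3L ≤ R, so both sides are defined). -/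
/-!
Each of `φ (a * b) • x'` and `(φ a * φ b) • x'` lies within `ε` of the appropriate image under
`f`, and `a • (b • x)` links them, so the two points are less than `3 * ε ≤ s₀` apart. The
systole bound then forces `φ (a * b) = φ a * φ b` whenever `a`, `b`, `a * b` displace `x` by at
most `R`. Displacement is subadditive, so for `s₁, s₂, s₃ ∈ Σ̄_L` the elements `s₂ * s₃` and
`s₁ * s₂ * s₃` displace `x` by at most `2 * L` and `3 * L ≤ R`, and two applications of the pair
case give the triple one.
-/

open Metric

theorem dist_mul_smul_le {X Γ : Type*} [PseudoMetricSpace X] [Monoid Γ] [MulAction Γ X]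
    [IsIsometricSMul Γ X] (x : X) (a b : Γ) :
    dist x ((a * b) • x) ≤ dist x (a • x) + dist x (b • x) :=
  calc dist x ((a * b) • x) ≤ dist x (a • x) + dist (a • x) (a • b • x) := by
        rw [mul_smul]; exact dist_triangle _ _ _
    _ = dist x (a • x) + dist x (b • x) := by rw [dist_smul]

theorem eq_of_dist_smul_lt_of_systole {X' Γ' : Type*} [PseudoMetricSpace X'] [Group Γ']
    [MulAction Γ' X'] [IsIsometricSMul Γ' X'] {x' : X'} {s₀ : ℝ}
    (hsys : ∀ g : Γ', g ≠ 1 → s₀ ≤ dist x' (g • x'))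
    {g h : Γ'} (hgh : dist (g • x') (h • x') < s₀) : g = h := by
  by_contra hne
  have hsys_gh := hsys (g⁻¹ * h) (fun h1 => hne (inv_mul_eq_one.mp h1))
  rw [← dist_smul g, smul_smul, mul_inv_cancel_left] at hsys_gh
  linarith

section ApproximateMorphism

variable {X X' Γ Γ' : Type*} [PseudoMetricSpace X] [PseudoMetricSpace X'] [Monoid Γ] [Group Γ']
  [MulAction Γ X] [MulAction Γ' X'] [IsIsometricSMul Γ' X']
  {x : X} {x' : X'} {ε R : ℝ} {f : X → X'} {φ : Γ → Γ'}

theorem dist_smul_mul_lt_of_approx (hfx : f x = x')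
    (hφ : ∀ g ∈ {g : Γ | dist x (g • x) ≤ R}, ∀ y ∈ closedBall x R,
      g • y ∈ closedBall x R → dist (f (g • y)) (φ g • f y) < ε)
    {a b : Γ} (ha : dist x (a • x) ≤ R) (hb : dist x (b • x) ≤ R)
    (hab : dist x ((a * b) • x) ≤ R) :
    dist (φ (a * b) • x') ((φ a * φ b) • x') < 3 * ε := by
  have hx : x ∈ closedBall x R := mem_closedBall_self (dist_nonneg.trans ha)
  have h_ab : dist (f ((a * b) • x)) (φ (a * b) • x') < ε := by
    simpa only [hfx] using hφ (a * b) hab x hx (mem_closedBall'.mpr hab)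
  have h_a : dist (f ((a * b) • x)) (φ a • f (b • x)) < ε := by
    rw [mul_smul] at hab ⊢
    exact hφ a ha (b • x) (mem_closedBall'.mpr hb) (mem_closedBall'.mpr hab)
  have h_b : dist (φ a • f (b • x)) ((φ a * φ b) • x') < ε := by
    rw [mul_smul, dist_smul, ← hfx]
    exact hφ b hb x hx (mem_closedBall'.mpr hb)
  calc dist (φ (a * b) • x') ((φ a * φ b) • x')
      ≤ dist (φ (a * b) • x') (f ((a * b) • x)) + dist (f ((a * b) • x)) (φ a • f (b • x)) +
          dist (φ a • f (b • x)) ((φ a * φ b) • x') := dist_triangle4 _ _ _ _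
    _ < 3 * ε := by rw [dist_comm] at h_ab; linarith

theorem map_mul_of_approx_of_systole {s₀ : ℝ} (hsys : ∀ g : Γ', g ≠ 1 → s₀ ≤ dist x' (g • x'))
    (hεs₀ : 3 * ε ≤ s₀) (hfx : f x = x')
    (hφ : ∀ g ∈ {g : Γ | dist x (g • x) ≤ R}, ∀ y ∈ closedBall x R,
      g • y ∈ closedBall x R → dist (f (g • y)) (φ g • f y) < ε)
    {a b : Γ} (ha : dist x (a • x) ≤ R) (hb : dist x (b • x) ≤ R)
    (hab : dist x ((a * b) • x) ≤ R) :
    φ (a * b) = φ a * φ b :=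
  eq_of_dist_smul_lt_of_systole hsys
    ((dist_smul_mul_lt_of_approx hfx hφ ha hb hab).trans_le hεs₀)

end ApproximateMorphism

theorem stmt_6_general {X X' Γ Γ' : Type*} [MetricSpace X] [MetricSpace X']
    [Group Γ] [Group Γ'] [MulAction Γ X] [IsIsometricSMul Γ X]
    [MulAction Γ' X'] [IsIsometricSMul Γ' X']
    (x : X) (x' : X') (s₀ : ℝ)
    (hsys' : ∀ g' : Γ', g' ≠ 1 → s₀ ≤ dist x' (g' • x'))
    (ε : ℝ) (hεs₀ : 3 * ε ≤ s₀)
    (L : ℝ) (R : ℝ) (hLR : 3 * L ≤ R)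
    (f : X → X') (φ : Γ → Γ')
    (hfx : f x = x')
    (hφ : ∀ g ∈ {g : Γ | dist x (g • x) ≤ R}, ∀ y ∈ Metric.closedBall x R,
      g • y ∈ Metric.closedBall x R → dist (f (g • y)) (φ g • f y) < ε) :
    ∀ s₁ ∈ {g : Γ | dist x (g • x) ≤ L}, ∀ s₂ ∈ {g : Γ | dist x (g • x) ≤ L},
      ∀ s₃ ∈ {g : Γ | dist x (g • x) ≤ L},
        φ (s₁ * s₂ * s₃) = φ s₁ * φ s₂ * φ s₃ := by
  intro s₁ (hs₁ : dist x (s₁ • x) ≤ L) s₂ (hs₂ : dist x (s₂ • x) ≤ L)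
    s₃ (hs₃ : dist x (s₃ • x) ≤ L)
  have hL : 0 ≤ L := dist_nonneg.trans hs₁
  have h₂₃ := dist_mul_smul_le x s₂ s₃
  have h₁₂₃ := dist_mul_smul_le x s₁ (s₂ * s₃)
  have map_mul {a b : Γ} := map_mul_of_approx_of_systole (a := a) (b := b) hsys' hεs₀ hfx hφ
  rw [mul_assoc, map_mul (by linarith) (by linarith) (by linarith),
    map_mul (by linarith) (by linarith) (by linarith), mul_assoc]

/-- Under the systole bound on `(Γ',x')`, `3ε ≤ s₀`, `3L ≤ 1/ε = R`, the
approximation map `φ : Σ̄_R(Γ,x) → Σ̄_R(Γ',x')` of an equivariant `ε`-approximation is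
multiplicative on triples of elements of `Σ̄_L(Γ,x)`:
`φ(s₁s₂s₃) = φ(s₁)φ(s₂)φ(s₃)`. -/
theorem stmt_6 {X X' Γ Γ' : Type*} [MetricSpace X] [MetricSpace X']
    [Group Γ] [Group Γ'] [MulAction Γ X] [IsIsometricSMul Γ X]
    [MulAction Γ' X'] [IsIsometricSMul Γ' X']
    (x : X) (x' : X') (s₀ : ℝ) (hs₀ : 0 < s₀)
    (hsys' : ∀ g' : Γ', g' ≠ 1 → s₀ ≤ dist x' (g' • x'))
    (ε : ℝ) (hε : 0 < ε) (hεs₀ : 3 * ε ≤ s₀)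
    (L : ℝ) (hL : 0 < L) (R : ℝ) (hR : R = 1 / ε) (hLR : 3 * L ≤ R)
    (f : X → X') (φ : Γ → Γ')
    (hfx : f x = x')
    (hφmem : Set.MapsTo φ {g : Γ | dist x (g • x) ≤ R} {g' : Γ' | dist x' (g' • x') ≤ R})
    (hφ : ∀ g ∈ {g : Γ | dist x (g • x) ≤ R}, ∀ y ∈ Metric.closedBall x R,
      g • y ∈ Metric.closedBall x R → dist (f (g • y)) (φ g • f y) < ε) :
    ∀ s₁ ∈ {g : Γ | dist x (g • x) ≤ L}, ∀ s₂ ∈ {g : Γ | dist x (g • x) ≤ L},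
      ∀ s₃ ∈ {g : Γ | dist x (g • x) ≤ L},
        φ (s₁ * s₂ * s₃) = φ s₁ * φ s₂ * φ s₃ :=
  stmt_6_general x x' s₀ hsys' ε hεs₀ L R hLR f φ hfx hφ
end

section
/- Let Γ and Γ' be groups and S a generating subset of Γ with 1 ∈ S. Suppose that the kernel of the canonical epimorphism from the free group F(S) on the set S onto Γ is the normal closure of a set of elements, each of which is a word of the form s₁·s₂·s₃ with s₁, s₂, s₃ ∈ S (viewed as free-group letters). Let T ⊆ Γ be a subset containing every product s₁·s₂·s₃ of three elements of S, and let φ : T → Γ' be a map satisfying φ(1) = 1 and φ(s₁·s₂·s₃) = φ(s₁)·φ(s₂)·φ(s₃) for all s₁, s₂, s₃ ∈ S. Then there exists a unique group homomorphism φ̃ : Γ → Γ' with φ̃(s) = φ(s) for every s ∈ S. -/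
/-!
The words of `F(S)` represent every element of `Γ`, so it suffices to check that the
homomorphism `F(S) → Γ'` sending each letter `s` to `φ s` kills the kernel of `F(S) → Γ`.
That kernel is normally generated by relators `s₁ s₂ s₃` with `s₁ s₂ s₃ = 1` in `Γ`, and such a
relator goes to `φ s₁ φ s₂ φ s₃ = φ (s₁ s₂ s₃) = φ 1 = 1`.
-/

namespace FreeGroup

variable {α G H : Type*} [Group G] [Group H]

theorem existsUnique_monoidHom_of_ker_lift_le {f : α → G}
    (hf : Subgroup.closure (Set.range f) = ⊤) {g : α → H}
    (hker : (lift f).ker ≤ (lift g).ker) :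
    ∃! φ : G →* H, ∀ a, φ (f a) = g a := by
  have hsurj : Function.Surjective (lift f) := by
    rw [← MonoidHom.range_eq_top, range_lift_eq_closure, hf]
  refine ⟨(lift f).liftOfSurjective hsurj ⟨lift g, hker⟩, fun a => ?_, fun ψ hψ => ?_⟩
  · simpa using (lift f).liftOfRightInverse_comp_apply _ _ ⟨lift g, hker⟩ (of a)
  · refine MonoidHom.eq_of_eqOn_dense hf ?_
    rintro _ ⟨a, rfl⟩
    simpa [hψ a] using
      ((lift f).liftOfRightInverse_comp_apply _ _ ⟨lift g, hker⟩ (of a)).symm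

theorem ker_lift_le_of_ker_eq_normalClosure {f : α → G} {g : α → H} {W : Set (FreeGroup α)}
    (hker : (lift f).ker = Subgroup.normalClosure W) (hW : ∀ w ∈ W, lift f w = 1 → lift g w = 1) :
    (lift f).ker ≤ (lift g).ker := by
  rw [hker]
  refine Subgroup.normalClosure_le_normal fun w hw => hW w hw ?_
  exact (lift f).mem_ker.mp (hker ▸ Subgroup.subset_normalClosure hw)

end FreeGroup

theorem stmt_7_general {Γ Γ' : Type*} [Group Γ] [Group Γ'] (S : Set Γ)
    (hgen : Subgroup.closure S = ⊤)
    (W : Set (FreeGroup S))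
    (hW : ∀ w ∈ W, ∃ s₁ s₂ s₃ : S, w = FreeGroup.of s₁ * FreeGroup.of s₂ * FreeGroup.of s₃)
    (hker : (FreeGroup.lift (fun s : S => (s : Γ))).ker = Subgroup.normalClosure W)
    (φ : Γ → Γ') (hφ1 : φ 1 = 1)
    (hφ : ∀ s₁ ∈ S, ∀ s₂ ∈ S, ∀ s₃ ∈ S, φ (s₁ * s₂ * s₃) = φ s₁ * φ s₂ * φ s₃) :
    ∃! φt : Γ →* Γ', ∀ s ∈ S, φt s = φ s := by
  have hrel := FreeGroup.ker_lift_le_of_ker_eq_normalClosure (g := fun s : S => φ s) hker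
    (fun w hw hw1 => by
      obtain ⟨s₁, s₂, s₃, rfl⟩ := hW w hw
      simp only [map_mul, FreeGroup.lift_apply_of] at hw1 ⊢
      rw [← hφ _ s₁.2 _ s₂.2 _ s₃.2, hw1, hφ1])
  obtain ⟨φt, hφt, huniq⟩ := FreeGroup.existsUnique_monoidHom_of_ker_lift_le
    (by rwa [Subtype.range_coe]) hrel
  exact ⟨φt, fun s hs => hφt ⟨s, hs⟩, fun ψ hψ => huniq ψ fun s => hψ s s.2⟩

/-- Let `S` be a generating set of `Γ` containing `1`, such that the kernel
of the canonical epimorphism `F(S) → Γ` is the normal closure of a set of words of the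
form `s₁·s₂·s₃` with `sᵢ ∈ S`. If `T ⊆ Γ` contains all products of three elements of `S`
and `φ : T → Γ'` satisfies `φ(1) = 1` and `φ(s₁s₂s₃) = φ(s₁)φ(s₂)φ(s₃)` for all
`s₁,s₂,s₃ ∈ S`, then there is a unique group homomorphism `φ̃ : Γ → Γ'` with
`φ̃(s) = φ(s)` for all `s ∈ S`. -/
theorem stmt_7 {Γ Γ' : Type*} [Group Γ] [Group Γ'] (S : Set Γ)
    (hgen : Subgroup.closure S = ⊤) (hone : (1 : Γ) ∈ S)
    (W : Set (FreeGroup S))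
    (hW : ∀ w ∈ W, ∃ s₁ s₂ s₃ : S, w = FreeGroup.of s₁ * FreeGroup.of s₂ * FreeGroup.of s₃)
    (hker : (FreeGroup.lift (fun s : S => (s : Γ))).ker = Subgroup.normalClosure W)
    (T : Set Γ) (hT : ∀ s₁ ∈ S, ∀ s₂ ∈ S, ∀ s₃ ∈ S, s₁ * s₂ * s₃ ∈ T)
    (φ : Γ → Γ') (hφ1 : φ 1 = 1)
    (hφ : ∀ s₁ ∈ S, ∀ s₂ ∈ S, ∀ s₃ ∈ S, φ (s₁ * s₂ * s₃) = φ s₁ * φ s₂ * φ s₃) :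
    ∃! φt : Γ →* Γ', ∀ s ∈ S, φt s = φ s :=
  stmt_7_general S hgen W hW hker φ hφ1 hφ
end

section
/- Let X be a geodesic metric space and X' a metric space; let Γ act by isometries on X and Γ' act by isometries on X', with basepoints x ∈ X, x' ∈ X'. Let D₀ ≥ 0 be such that every point of X lies at distance at most D₀ from the orbit Γ·x, let ε ≥ 0, and let L ≥ 8·D₀ with L > 0. Let φ̃ : Γ → Γ' be a group homomorphism such that dist(x', φ̃(h)·x') ≤ dist(x, h·x) + 2ε for every h ∈ Γ with dist(x, h·x) ≤ L. Then for every g ∈ Γ with dist(x, g·x) ≥ L one has dist(x', φ̃(g)·x') ≤ dist(x, g·x)·(1 + 4(D₀+ε)/L) + 2(D₀+ε). -/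
/-!
Subdivide a geodesic from `x` to `g • x`, of length `d`, into `n = ⌈2 d / L⌉` pieces of length `d / n ≤ L / 2`
and move each subdivision point to a nearby orbit point `γᵢ • x`, keeping `γ₀ = 1` and `γₙ = g`.
Consecutive orbit points are then at most `d / n + 2 D₀ ≤ L` apart, so the hypothesis on short
elements bounds each step `dist (φ̃ γᵢ • x') (φ̃ γᵢ₊₁ • x')` by `d / n + 2 D₀ + 2 ε`, and summing the
`n ≤ 2 d / L + 1` steps gives the estimate.
-/

open Set

section IsometricAction

variable {Γ X : Type*} [Group Γ] [PseudoMetricSpace X] [MulAction Γ X] [IsIsometricSMul Γ X]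

theorem dist_smul_smul_eq_dist_inv_mul_smul (a b : Γ) (x : X) :
    dist (a • x) (b • x) = dist x ((a⁻¹ * b) • x) := by
  rw [mul_smul, ← dist_smul a⁻¹ (a • x), inv_smul_smul]

theorem dist_map_smul_smul_le {Γ' X' : Type*} [Group Γ'] [PseudoMetricSpace X'] [MulAction Γ' X']
    [IsIsometricSMul Γ' X'] {x : X} {x' : X'} {L ε : ℝ} {φ : Γ →* Γ'}
    (hshort : ∀ h : Γ, dist x (h • x) ≤ L → dist x' (φ h • x') ≤ dist x (h • x) + 2 * ε)
    {a b : Γ} (hab : dist (a • x) (b • x) ≤ L) :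
    dist (φ a • x') (φ b • x') ≤ dist (a • x) (b • x) + 2 * ε := by
  rw [dist_smul_smul_eq_dist_inv_mul_smul] at hab ⊢
  rw [dist_smul_smul_eq_dist_inv_mul_smul, ← map_inv, ← map_mul]
  exact hshort _ hab

end IsometricAction

theorem exists_orbit_chain_near {Γ X : Type*} [Group Γ] [PseudoMetricSpace X] [MulAction Γ X]
    {x : X} {D₀ : ℝ} (hD₀ : 0 ≤ D₀)
    (hcoc : ∀ y : X, ∃ g : Γ, dist y (g • x) ≤ D₀) (p : ℕ → X) {n : ℕ} (hn : n ≠ 0) {g : Γ}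
    (hp0 : p 0 = x) (hpn : p n = g • x) :
    ∃ γ : ℕ → Γ, γ 0 = 1 ∧ γ n = g ∧ ∀ i, dist (p i) (γ i • x) ≤ D₀ := by
  classical
  choose f hf using hcoc
  refine ⟨fun i ↦ if i = 0 then 1 else if i = n then g else f (p i), by simp, by simp [hn], ?_⟩
  intro i
  dsimp only
  split_ifs with h0 hN
  · simpa [h0, hp0] using hD₀
  · simpa [hN, hpn] using hD₀
  · exact hf _

theorem dist_subdivision_succ {X : Type*} [PseudoMetricSpace X] {c : ℝ → X} {d : ℝ}
    (hc : ∀ s ∈ Icc 0 d, ∀ t ∈ Icc 0 d, dist (c s) (c t) = |s - t|) (hd : 0 ≤ d)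
    {n i : ℕ} (hi : i < n) :
    dist (c (i * d / n)) (c ((i + 1 : ℕ) * d / n)) = d / n := by
  have hmem : ∀ j ≤ n, (j : ℝ) * d / n ∈ Icc 0 d := fun j hj ↦
    ⟨by positivity, div_le_of_le_mul₀ (by positivity) hd
      (by rw [mul_comm]; gcongr)⟩
  rw [hc _ (hmem i hi.le) _ (hmem (i + 1) hi), abs_sub_comm, ← sub_div, ← sub_mul]
  push_cast
  rw [add_sub_cancel_left, one_mul, abs_of_nonneg (by positivity)]

theorem exists_orbit_chain_of_geodesic {Γ X : Type*} [Group Γ] [PseudoMetricSpace X]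
    [MulAction Γ X] {x : X} {D₀ : ℝ} (hD₀ : 0 ≤ D₀)
    (hcoc : ∀ y : X, ∃ g : Γ, dist y (g • x) ≤ D₀) {g : Γ} {c : ℝ → X} {d : ℝ} (hd : 0 ≤ d)
    (hc0 : c 0 = x) (hcd : c d = g • x)
    (hc : ∀ s ∈ Icc 0 d, ∀ t ∈ Icc 0 d, dist (c s) (c t) = |s - t|) {n : ℕ} (hn : n ≠ 0) :
    ∃ γ : ℕ → Γ, γ 0 = 1 ∧ γ n = g ∧
      ∀ i < n, dist (γ i • x) (γ (i + 1) • x) ≤ d / n + 2 * D₀ := by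
  obtain ⟨γ, hγ0, hγn, hnear⟩ := exists_orbit_chain_near hD₀ hcoc (fun i : ℕ ↦ c (i * d / n)) hn
    (by simpa using hc0) (by simpa [hn] using hcd)
  refine ⟨γ, hγ0, hγn, fun i hi ↦ ?_⟩
  calc dist (γ i • x) (γ (i + 1) • x)
      ≤ dist (γ i • x) (c (i * d / n)) + dist (c (i * d / n)) (c ((i + 1 : ℕ) * d / n))
          + dist (c ((i + 1 : ℕ) * d / n)) (γ (i + 1) • x) := dist_triangle4 _ _ _ _
    _ ≤ D₀ + d / n + D₀ := by
        gcongr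
        · exact dist_comm (γ i • x) _ ▸ hnear i
        · exact (dist_subdivision_succ hc hd hi).le
        · exact hnear (i + 1)
    _ = d / n + 2 * D₀ := by ring

theorem natCeil_two_mul_div_bounds {d L : ℝ} (hL : 0 < L) (hd : 0 < d) :
    ⌈2 * d / L⌉₊ ≠ 0 ∧ d / ⌈2 * d / L⌉₊ ≤ L / 2 ∧ (⌈2 * d / L⌉₊ : ℝ) ≤ 2 * d / L + 1 := by
  have hceil : 2 * d / L ≤ ⌈2 * d / L⌉₊ := Nat.le_ceil _
  have hpos : (0 : ℝ) < ⌈2 * d / L⌉₊ := (by positivity : (0 : ℝ) < 2 * d / L).trans_le hceil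
  refine ⟨by exact_mod_cast hpos.ne', ?_, (Nat.ceil_lt_add_one (by positivity)).le⟩
  rw [div_le_iff₀ hpos]
  rw [div_le_iff₀ hL] at hceil
  linarith

/-- Let `X` be a geodesic metric space on which `Γ` acts by isometries with
`dist(y, Γ•x) ≤ D₀` for all `y`, and let `Γ'` act by isometries on `X'`. Let `ε ≥ 0` and
`L ≥ 8D₀`, `L > 0`. If a homomorphism `φ̃ : Γ → Γ'` satisfies
`dist(x', φ̃(h)•x') ≤ dist(x, h•x) + 2ε` for every `h` with `dist(x, h•x) ≤ L`, then for
every `g` with `dist(x, g•x) ≥ L` one has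
`dist(x', φ̃(g)•x') ≤ dist(x, g•x)·(1 + 4(D₀+ε)/L) + 2(D₀+ε)`. -/
theorem stmt_8 {X X' Γ Γ' : Type*} [MetricSpace X] [MetricSpace X']
    [Group Γ] [Group Γ'] [MulAction Γ X] [IsIsometricSMul Γ X]
    [MulAction Γ' X'] [IsIsometricSMul Γ' X']
    (hgeo : ∀ y z : X, ∃ c : ℝ → X, c 0 = y ∧ c (dist y z) = z ∧
      ∀ s ∈ Set.Icc (0 : ℝ) (dist y z), ∀ t ∈ Set.Icc (0 : ℝ) (dist y z),
        dist (c s) (c t) = |s - t|)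
    (x : X) (x' : X') (D₀ : ℝ) (hD₀ : 0 ≤ D₀)
    (hcoc : ∀ y : X, ∃ g : Γ, dist y (g • x) ≤ D₀)
    (ε : ℝ) (hε : 0 ≤ ε) (L : ℝ) (hL : 8 * D₀ ≤ L) (hL0 : 0 < L)
    (φt : Γ →* Γ')
    (hshort : ∀ h : Γ, dist x (h • x) ≤ L →
      dist x' (φt h • x') ≤ dist x (h • x) + 2 * ε) :
    ∀ g : Γ, L ≤ dist x (g • x) →
      dist x' (φt g • x') ≤ dist x (g • x) * (1 + 4 * (D₀ + ε) / L) + 2 * (D₀ + ε) := by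
  intro g hg
  obtain ⟨c, hc0, hcd, hc⟩ := hgeo x (g • x)
  set d := dist x (g • x)
  set n := ⌈2 * d / L⌉₊
  obtain ⟨hn, hdn, hnd⟩ := natCeil_two_mul_div_bounds hL0 (hL0.trans_le hg)
  obtain ⟨γ, hγ0, hγn, hstep⟩ :=
    exists_orbit_chain_of_geodesic hD₀ hcoc dist_nonneg hc0 hcd hc hn
  have hchain : ∀ i < n, dist (φt (γ i) • x') (φt (γ (i + 1)) • x') ≤ d / n + 2 * (D₀ + ε) :=
    fun i hi ↦ (dist_map_smul_smul_le hshort ((hstep i hi).trans (by linarith))).trans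
      (by linarith [hstep i hi])
  calc dist x' (φt g • x')
      ≤ ∑ _i ∈ Finset.range n, (d / n + 2 * (D₀ + ε)) := by
        have := dist_le_range_sum_of_dist_le (f := fun i ↦ φt (γ i) • x') n fun hi ↦ hchain _ hi
        rwa [hγ0, hγn, map_one, one_smul] at this
    _ = d + n * (2 * (D₀ + ε)) := by
        rw [Finset.sum_const, Finset.card_range, nsmul_eq_mul, mul_add,
          mul_div_cancel₀ _ (Nat.cast_ne_zero.mpr hn)]
    _ ≤ d + (2 * d / L + 1) * (2 * (D₀ + ε)) := by gcongr
    _ = d * (1 + 4 * (D₀ + ε) / L) + 2 * (D₀ + ε) := by field_simp; ring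
end

section
/- Let X and X' be metric spaces, Γ and Γ' groups acting by isometries on X and X' respectively, and x ∈ X, x' ∈ X' basepoints. For R ≥ 0 set N(R) := #{g ∈ Γ : dist(x, g·x) ≤ R} and N'(R) := #{g' ∈ Γ' : dist(x', g'·x') ≤ R}, and assume both sets are finite for every R ≥ 0. Define Ent(Γ,x) := limsup_{R→∞} (1/R)·log N(R) and Ent(Γ',x') := limsup_{R→∞} (1/R)·log N'(R). Suppose there exist an injective map θ : Γ → Γ' and constants a ≥ 1, C ≥ 0, L ≥ 0 such that dist(x', θ(g)·x') ≤ a·dist(x, g·x) + C for every g ∈ Γ with dist(x, g·x) ≥ L. Then Ent(Γ,x) ≤ a·Ent(Γ',x'). -/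
/-! Elements of `Γ` moving `x` by more than `L` are sent injectively by `θ` into the `Γ'`-ball of
radius `a R + C`, so `N(R) ≤ N(L) + N'(aR + C) ≤ (N(L) + 1) · N'(aR + C)`. After taking logarithms
and dividing by `R`, the additive constant `log (N(L) + 1)` disappears in the limit, and the
reparametrisation `R ↦ aR + C` multiplies the exponential growth rate by at most `a`. -/

open Filter

/-- The orbit-counting entropy of the action of `G` on `X` at the basepoint `x`:
`Ent(G,x) = limsup_{R→∞} (1/R)·log #{g : dist(x, g•x) ≤ R}` (as an extended real). -/
noncomputable def orbitEntropy (G : Type*) {X : Type*} [Group G] [MetricSpace X]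
    [MulAction G X] (x : X) : EReal :=
  limsup (fun R : ℝ => ((Real.log ({g : G | dist x (g • x) ≤ R}.ncard) / R : ℝ) : EReal))
    atTop

open Topology

theorem EReal.exists_real_gt_mul_lt {a c : ℝ} {T : EReal} (ha : 0 < a) (h : (a : EReal) * T < c) :
    ∃ d : ℝ, T < d ∧ a * d < c := by
  have hT : T < (c : EReal) / a := by
    rw [EReal.lt_div_iff (by exact_mod_cast ha) (EReal.coe_ne_top a), mul_comm]
    exact h
  obtain ⟨d, hTd, hdc⟩ := EReal.exists_between_coe_real hT
  refine ⟨d, hTd, ?_⟩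
  rw [EReal.lt_div_iff (by exact_mod_cast ha) (EReal.coe_ne_top a), ← EReal.coe_mul,
    EReal.coe_lt_coe_iff] at hdc
  linarith

theorem limsup_div_le_mul_limsup_div {u v : ℝ → ℝ} {a b C : ℝ} (ha : 0 < a)
    (huv : ∀ᶠ R in atTop, u R ≤ b + v (a * R + C)) :
    limsup (fun R => ((u R / R : ℝ) : EReal)) atTop ≤
      (a : EReal) * limsup (fun R => ((v R / R : ℝ) : EReal)) atTop := by
  refine EReal.le_of_forall_lt_iff_le.mp fun c hc => ?_
  obtain ⟨d, hvd, hdc⟩ := EReal.exists_real_gt_mul_lt ha hc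
  have hv : ∀ᶠ S in atTop, v S < d * S := by
    filter_upwards [eventually_lt_of_limsup_lt hvd, eventually_gt_atTop 0] with S hS hS0
    rwa [EReal.coe_lt_coe_iff, div_lt_iff₀ hS0] at hS
  have hv_affine : ∀ᶠ R in atTop, v (a * R + C) < d * (a * R + C) :=
    (tendsto_atTop_add_const_right _ C (tendsto_id.const_mul_atTop ha)).eventually hv
  have hbound : Tendsto (fun R => b / R + d * (a + C / R)) atTop (𝓝 (a * d)) := by
    have hinv : ∀ t : ℝ, Tendsto (fun R : ℝ => t / R) atTop (𝓝 0) :=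
      fun t => tendsto_const_nhds.div_atTop tendsto_id
    simpa [mul_comm] using (hinv b).add (((hinv C).const_add a).const_mul d)
  refine limsup_le_of_le (by isBoundedDefault) ?_
  filter_upwards [huv, hv_affine, hbound.eventually_lt_const hdc, eventually_gt_atTop 0]
    with R huvR hvR hlt hR
  rw [EReal.coe_le_coe_iff, div_le_iff₀ hR]
  calc u R ≤ b + d * (a * R + C) := by linarith
    _ = (b / R + d * (a + C / R)) * R := by field_simp
    _ ≤ c * R := by gcongr

theorem Real.log_le_log_add_one_add_log {k m n : ℝ} (hk : 0 < k) (hm : 0 ≤ m) (hn : 1 ≤ n)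
    (h : k ≤ m + n) : Real.log k ≤ Real.log (m + 1) + Real.log n := by
  rw [← Real.log_mul (by positivity) (by positivity)]
  exact Real.log_le_log hk (by nlinarith)

theorem Set.ncard_le_ncard_add_ncard_of_subset_union_preimage {α β : Type*} {s t : Set α}
    {u : Set β} {f : α → β} (hf : Function.Injective f) (ht : t.Finite) (hu : u.Finite)
    (h : s ⊆ t ∪ f ⁻¹' u) : s.ncard ≤ t.ncard + u.ncard :=
  calc s.ncard ≤ (t ∪ f ⁻¹' u).ncard := Set.ncard_le_ncard h (ht.union (hu.preimage hf.injOn))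
    _ ≤ t.ncard + (f ⁻¹' u).ncard := Set.ncard_union_le _ _
    _ ≤ t.ncard + u.ncard := by
      gcongr
      exact Set.ncard_le_ncard_of_injOn f (fun _ hg => hg) hf.injOn hu

section OrbitCounting

variable {G G' X X' : Type*} [Group G] [Group G'] [PseudoMetricSpace X] [PseudoMetricSpace X']
  [MulAction G X] [MulAction G' X']

theorem one_le_ncard_orbit_ball {x : X} {R : ℝ} (hR : 0 ≤ R)
    (hfin : {g : G | dist x (g • x) ≤ R}.Finite) : 1 ≤ {g : G | dist x (g • x) ≤ R}.ncard :=
  (Set.ncard_pos hfin).mpr ⟨1, by simpa using hR⟩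

theorem ncard_orbit_ball_le_of_injective_comparison {x : X} {x' : X'} {θ : G → G'}
    (hθ : Function.Injective θ) {a C L R : ℝ} (ha : 0 ≤ a)
    (hcomp : ∀ g : G, L ≤ dist x (g • x) → dist x' (θ g • x') ≤ a * dist x (g • x) + C)
    (hfinL : {g : G | dist x (g • x) ≤ L}.Finite)
    (hfin' : {g' : G' | dist x' (g' • x') ≤ a * R + C}.Finite) :
    {g : G | dist x (g • x) ≤ R}.ncard ≤
      {g : G | dist x (g • x) ≤ L}.ncard + {g' : G' | dist x' (g' • x') ≤ a * R + C}.ncard := by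
  refine Set.ncard_le_ncard_add_ncard_of_subset_union_preimage hθ hfinL hfin' fun g hg => ?_
  rcases le_total (dist x (g • x)) L with hle | hge
  · exact Or.inl hle
  · exact Or.inr ((hcomp g hge).trans (by gcongr; exact hg))

end OrbitCounting

theorem stmt_9_general {X X' Γ Γ' : Type*} [MetricSpace X] [MetricSpace X']
    [Group Γ] [Group Γ'] [MulAction Γ X]
    [MulAction Γ' X']
    (x : X) (x' : X')
    (hfin : ∀ R : ℝ, 0 ≤ R → {g : Γ | dist x (g • x) ≤ R}.Finite)
    (hfin' : ∀ R : ℝ, 0 ≤ R → {g' : Γ' | dist x' (g' • x') ≤ R}.Finite)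
    (θ : Γ → Γ') (hθ : Function.Injective θ)
    (a C L : ℝ) (ha : 1 ≤ a) (hC : 0 ≤ C) (hL : 0 ≤ L)
    (hcomp : ∀ g : Γ, L ≤ dist x (g • x) → dist x' (θ g • x') ≤ a * dist x (g • x) + C) :
    orbitEntropy Γ x ≤ (a : EReal) * orbitEntropy Γ' x' := by
  refine limsup_div_le_mul_limsup_div (by linarith) (C := C)
    (b := Real.log ({g : Γ | dist x (g • x) ≤ L}.ncard + 1)) ?_
  filter_upwards [eventually_ge_atTop 0] with R hR
  have haRC : 0 ≤ a * R + C := by positivity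
  refine Real.log_le_log_add_one_add_log ?_ (Nat.cast_nonneg _) ?_ ?_
  · exact_mod_cast one_le_ncard_orbit_ball hR (hfin R hR)
  · exact_mod_cast one_le_ncard_orbit_ball haRC (hfin' _ haRC)
  · exact_mod_cast ncard_orbit_ball_le_of_injective_comparison hθ (by linarith) hcomp
      (hfin L hL) (hfin' _ haRC)

/-- If all orbital counting sets are finite and there are an injective map
`θ : Γ → Γ'` and constants `a ≥ 1`, `C ≥ 0`, `L ≥ 0` with
`dist(x', θ(g)•x') ≤ a·dist(x, g•x) + C` whenever `dist(x, g•x) ≥ L`, then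
`Ent(Γ,x) ≤ a·Ent(Γ',x')`. -/
theorem stmt_9 {X X' Γ Γ' : Type*} [MetricSpace X] [MetricSpace X']
    [Group Γ] [Group Γ'] [MulAction Γ X] [IsIsometricSMul Γ X]
    [MulAction Γ' X'] [IsIsometricSMul Γ' X']
    (x : X) (x' : X')
    (hfin : ∀ R : ℝ, 0 ≤ R → {g : Γ | dist x (g • x) ≤ R}.Finite)
    (hfin' : ∀ R : ℝ, 0 ≤ R → {g' : Γ' | dist x' (g' • x') ≤ R}.Finite)
    (θ : Γ → Γ') (hθ : Function.Injective θ)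
    (a C L : ℝ) (ha : 1 ≤ a) (hC : 0 ≤ C) (hL : 0 ≤ L)
    (hcomp : ∀ g : Γ, L ≤ dist x (g • x) → dist x' (θ g • x') ≤ a * dist x (g • x) + C) :
    orbitEntropy Γ x ≤ (a : EReal) * orbitEntropy Γ' x' :=
  stmt_9_general x x' hfin hfin' θ hθ a C L ha hC hL hcomp
end

section
/- Let X and X' be metric spaces, Γ a group acting by isometries on X, Γ' a group acting by isometries on X', and x ∈ X, x' ∈ X' basepoints. Let s₀ > 0 satisfy dist(x, g·x) ≥ s₀ for every g ∈ Γ with g ≠ 1 and dist(x', g'·x') ≥ s₀ for every g' ∈ Γ' with g' ≠ 1. Let ε > 0 with 3ε ≤ s₀ and L > 0 with 3L ≤ 1/ε, and set R := 1/ε. Suppose f : X → X' satisfies f(x) = x' and |dist(f(y₁), f(y₂)) − dist(y₁, y₂)| < ε for all y₁, y₂ ∈ B̄(x,R); φ : Σ̄_R(Γ,x) → Σ̄_R(Γ',x') satisfies dist(f(g·y), φ(g)·f(y)) < ε for every g ∈ Σ̄_R(Γ,x) and y ∈ B̄(x,R) with g·y ∈ B̄(x,R); and ψ : Σ̄_R(Γ',x')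 → Σ̄_R(Γ,x) satisfies dist(f(ψ(g')·y), g'·f(y)) < ε for every g' ∈ Σ̄_R(Γ',x') and y ∈ B̄(x,R) with ψ(g')·y ∈ B̄(x,R). Assume moreover that Σ̄_{L−2ε}(Γ,x) generates Γ, that Σ̄_{L−2ε}(Γ',x') generates Γ', and that the kernels of the canonical epimorphisms F(Σ̄_L(Γ,x)) → Γ and F(Σ̄_L(Γ',x')) → Γ' are normal closures of sets of words of the form s₁·s₂·s₃ with the sᵢ letters from the respective generating sets. Then there exist mutually inverse group isomorphisms φ̃ : Γ → Γ' and ψ̃ : Γ' → Γ such that φ̃(s) = φ(s) for every s ∈ Σ̄_L(Γ,x) and ψ̃(s') = ψ(s') for every s' ∈ Σ̄_L(Γ',x'). -/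
/-!
Since nontrivial elements move the basepoints by at least `s₀ ≥ 3ε`, two elements whose actions
at the basepoint agree up to `3ε` are equal. Comparing through `f`, this makes `φ` multiplicative
on `Σ̄_R(Γ, x)`, `ψ ∘ φ` and `φ ∘ ψ` the identity on the `R`-balls, and then `ψ` multiplicative on
`Σ̄_L(Γ', x')`. So `φ` and `ψ` kill the relators of length three and extend to homomorphisms; these
are mutually inverse on the generating sets `Σ̄_{L-2ε}`, which `φ` and `ψ` map into `Σ̄_L`.
If `s₀ > L - 2ε`, the generating sets, hence both groups, are trivial.
-/

open Metric Set Subgroup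

section Displacement

variable (Γ : Type*) {X : Type*} [PseudoMetricSpace X] [Group Γ] [MulAction Γ X]

/-- `Σ̄_r(Γ, x)`. -/
def displacementBall (x : X) (r : ℝ) : Set Γ := {g | dist x (g • x) ≤ r}

variable {Γ} {x : X} {r r' : ℝ} {g h : Γ}

theorem mem_displacementBall : g ∈ displacementBall Γ x r ↔ dist x (g • x) ≤ r := Iff.rfl

theorem one_mem_displacementBall (hr : 0 ≤ r) : (1 : Γ) ∈ displacementBall Γ x r := by
  simpa [mem_displacementBall] using hr

theorem displacementBall_mono (h : r ≤ r') : displacementBall Γ x r ⊆ displacementBall Γ x r' :=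
  fun _ hg ↦ le_trans hg h

theorem smul_mem_closedBall_of_mem_displacementBall (hg : g ∈ displacementBall Γ x r) :
    g • x ∈ closedBall x r := by
  rwa [mem_closedBall, dist_comm]

theorem dist_smul_smul_eq [IsIsometricSMul Γ X] (x : X) (a b : Γ) :
    dist (a • x) (b • x) = dist x ((a⁻¹ * b) • x) := by
  rw [← dist_smul a x, smul_smul, mul_inv_cancel_left]

theorem inv_mem_displacementBall [IsIsometricSMul Γ X] (hg : g ∈ displacementBall Γ x r) :
    g⁻¹ ∈ displacementBall Γ x r := by
  rwa [mem_displacementBall, ← mul_one g⁻¹, ← dist_smul_smul_eq, one_smul, dist_comm]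

theorem mul_mem_displacementBall [IsIsometricSMul Γ X] (hg : g ∈ displacementBall Γ x r)
    (hh : h ∈ displacementBall Γ x r') : g * h ∈ displacementBall Γ x (r + r') := by
  calc dist x ((g * h) • x) ≤ dist x (g • x) + dist (g • x) (g • h • x) :=
        mul_smul g h x ▸ dist_triangle _ _ _
    _ ≤ r + r' := by rw [dist_smul]; exact add_le_add hg hh

theorem eq_of_dist_smul_lt [IsIsometricSMul Γ X] {s₀ : ℝ}
    (hsys : ∀ g : Γ, g ≠ 1 → s₀ ≤ dist x (g • x)) {a b : Γ}
    (hab : dist (a • x) (b • x) < s₀) : a = b := by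
  by_contra hne
  have := hsys (a⁻¹ * b) (fun h ↦ hne (inv_mul_eq_one.mp h))
  rw [← dist_smul_smul_eq] at this
  linarith

theorem subsingleton_of_closure_displacementBall_eq_top {s₀ : ℝ}
    (hsys : ∀ g : Γ, g ≠ 1 → s₀ ≤ dist x (g • x)) (hgen : closure (displacementBall Γ x r) = ⊤)
    (hr : r < s₀) : Subsingleton Γ := by
  have hbot : closure (displacementBall Γ x r) = ⊥ := closure_eq_bot_iff.mpr fun g hg ↦ by
    by_contra hne
    exact (hsys g hne).not_gt (hg.trans_lt hr)
  exact Subgroup.subsingleton_iff.mp (subsingleton_of_bot_eq_top (hbot.symm.trans hgen))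

end Displacement

section Presentation

variable {Γ Γ' : Type*} [Group Γ] [Group Γ']

theorem exists_monoidHom_eqOn_of_presentation {S : Set Γ} (hS : closure S = ⊤)
    {W : Set (FreeGroup S)} (hker : (FreeGroup.lift ((↑) : S → Γ)).ker = normalClosure W)
    (φ : Γ → Γ') (hW : ∀ w ∈ W, FreeGroup.lift (fun s : S ↦ φ s) w = 1) :
    ∃ Φ : Γ →* Γ', ∀ s ∈ S, Φ s = φ s := by
  set π := FreeGroup.lift ((↑) : S → Γ)
  have hπ : Function.Surjective π := by
    rw [← MonoidHom.range_eq_top, FreeGroup.range_lift_eq_closure, Subtype.range_coe, hS]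
  have hle : π.ker ≤ (FreeGroup.lift fun s : S ↦ φ s).ker :=
    hker ▸ normalClosure_le_normal hW
  refine ⟨π.liftOfRightInverse _ (Function.rightInverse_surjInv hπ) ⟨_, hle⟩, fun s hs ↦ ?_⟩
  simpa [π] using π.liftOfRightInverse_comp_apply _ (Function.rightInverse_surjInv hπ)
    ⟨_, hle⟩ (FreeGroup.of ⟨s, hs⟩)

theorem mul_mul_eq_one_of_mulOn {T : Set Γ} {φ : Γ → Γ'} (hT₁ : 1 ∈ T)
    (hT_inv : ∀ a ∈ T, a⁻¹ ∈ T) (hmul : ∀ a ∈ T, ∀ b ∈ T, a * b ∈ T → φ (a * b) = φ a * φ b)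
    {s₁ s₂ s₃ : Γ} (h₁ : s₁ ∈ T) (h₂ : s₂ ∈ T) (h₃ : s₃ ∈ T) (h : s₁ * s₂ * s₃ = 1) :
    φ s₁ * φ s₂ * φ s₃ = 1 := by
  have hφ₁ : φ 1 = 1 := by simpa using (hmul 1 hT₁ 1 hT₁ (by simpa using hT₁)).symm
  have h₁₂ : s₁ * s₂ ∈ T := eq_inv_of_mul_eq_one_left h ▸ hT_inv s₃ h₃
  rw [← hmul _ h₁ _ h₂ h₁₂, ← hmul _ h₁₂ _ h₃ (h ▸ hT₁), h, hφ₁]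

/-- Relators of length three only involve products of two generators, so they are killed by any
map multiplicative on a symmetric set `T ⊇ S` containing `1`. -/
theorem exists_monoidHom_eqOn_of_triangular_presentation {S T : Set Γ} (hS : closure S = ⊤)
    {W : Set (FreeGroup S)} (hW : ∀ w ∈ W, ∃ s₁ s₂ s₃ : S,
      w = FreeGroup.of s₁ * FreeGroup.of s₂ * FreeGroup.of s₃)
    (hker : (FreeGroup.lift ((↑) : S → Γ)).ker = normalClosure W) {φ : Γ → Γ'}
    (hST : S ⊆ T) (hT₁ : 1 ∈ T) (hT_inv : ∀ a ∈ T, a⁻¹ ∈ T)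
    (hmul : ∀ a ∈ T, ∀ b ∈ T, a * b ∈ T → φ (a * b) = φ a * φ b) :
    ∃ Φ : Γ →* Γ', ∀ s ∈ S, Φ s = φ s := by
  refine exists_monoidHom_eqOn_of_presentation hS hker φ fun w hw ↦ ?_
  have hw₁ : w ∈ (FreeGroup.lift ((↑) : S → Γ)).ker := hker ▸ subset_normalClosure hw
  obtain ⟨s₁, s₂, s₃, rfl⟩ := hW w hw
  simp only [MonoidHom.mem_ker, map_mul, FreeGroup.lift_apply_of] at hw₁ ⊢
  exact mul_mul_eq_one_of_mulOn hT₁ hT_inv hmul (hST s₁.2) (hST s₂.2) (hST s₃.2) hw₁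

end Presentation

section Approximation

variable {X X' Γ Γ' : Type*} [PseudoMetricSpace X] [PseudoMetricSpace X'] [Group Γ] [Group Γ']
  [MulAction Γ X] [MulAction Γ' X'] {f : X → X'} {x : X} {R ε : ℝ}

def ApproxIsometryOn (f : X → X') (s : Set X) (ε : ℝ) : Prop :=
  ∀ y₁ ∈ s, ∀ y₂ ∈ s, |dist (f y₁) (f y₂) - dist y₁ y₂| < ε

def ApproxIntertwines (f : X → X') (x : X) (R ε : ℝ) (a : Γ) (b : Γ') : Prop :=
  ∀ y ∈ closedBall x R, a • y ∈ closedBall x R → dist (f (a • y)) (b • f y) < ε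

namespace ApproxIntertwines

theorem abs_dist_sub_lt (hf : ApproxIsometryOn f (closedBall x R) ε) {a : Γ} {b : Γ'}
    (hab : ApproxIntertwines f x R ε a b) (ha : a ∈ displacementBall Γ x R) :
    |dist (f x) (b • f x) - dist x (a • x)| < 2 * ε := by
  have hx : x ∈ closedBall x R := mem_closedBall_self (dist_nonneg.trans ha)
  have hax := smul_mem_closedBall_of_mem_displacementBall ha
  have hf_ax := abs_sub_lt_iff.mp (hf x hx _ hax)
  have hab_x := hab x hx hax
  have := dist_triangle (f x) (f (a • x)) (b • f x)
  have := dist_triangle_right (f x) (f (a • x)) (b • f x)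
  rw [abs_sub_lt_iff]
  constructor <;> linarith

theorem left_unique [IsIsometricSMul Γ X] (hf : ApproxIsometryOn f (closedBall x R) ε)
    (hsys : ∀ g : Γ, g ≠ 1 → 3 * ε ≤ dist x (g • x)) {a a' : Γ} {b : Γ'}
    (hab : ApproxIntertwines f x R ε a b) (ha'b : ApproxIntertwines f x R ε a' b)
    (ha : a ∈ displacementBall Γ x R) (ha' : a' ∈ displacementBall Γ x R) : a = a' := by
  have hx : x ∈ closedBall x R := mem_closedBall_self (dist_nonneg.trans ha)
  have hax := smul_mem_closedBall_of_mem_displacementBall ha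
  have ha'x := smul_mem_closedBall_of_mem_displacementBall ha'
  refine eq_of_dist_smul_lt hsys ?_
  have hab_x := hab x hx hax
  have ha'b_x := ha'b x hx ha'x
  have hf_aa' := (abs_sub_lt_iff.mp (hf _ hax _ ha'x)).2
  have := dist_triangle_right (f (a • x)) (f (a' • x)) (b • f x)
  linarith

theorem right_unique [IsIsometricSMul Γ' X']
    (hsys' : ∀ g' : Γ', g' ≠ 1 → 3 * ε ≤ dist (f x) (g' • f x)) {a : Γ} {b b' : Γ'}
    (hab : ApproxIntertwines f x R ε a b) (hab' : ApproxIntertwines f x R ε a b')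
    (ha : a ∈ displacementBall Γ x R) : b = b' := by
  have hx : x ∈ closedBall x R := mem_closedBall_self (dist_nonneg.trans ha)
  have hax := smul_mem_closedBall_of_mem_displacementBall ha
  refine eq_of_dist_smul_lt hsys' ?_
  have hab_x := hab x hx hax
  have hab'_x := hab' x hx hax
  have := dist_triangle_left (b • f x) (b' • f x) (f (a • x))
  linarith [dist_nonneg (x := b • f x) (y := b' • f x)]

theorem mul [IsIsometricSMul Γ' X']
    (hsys' : ∀ g' : Γ', g' ≠ 1 → 3 * ε ≤ dist (f x) (g' • f x)) {a c : Γ} {b d e : Γ'}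
    (hab : ApproxIntertwines f x R ε a b) (hcd : ApproxIntertwines f x R ε c d)
    (hace : ApproxIntertwines f x R ε (a * c) e) (hc : c ∈ displacementBall Γ x R)
    (hac : a * c ∈ displacementBall Γ x R) : e = b * d := by
  have hx : x ∈ closedBall x R := mem_closedBall_self (dist_nonneg.trans hc)
  have hcx := smul_mem_closedBall_of_mem_displacementBall hc
  have hacx := smul_mem_closedBall_of_mem_displacementBall hac
  refine eq_of_dist_smul_lt hsys' ?_
  have hace_x := hace x hx hacx
  have hab_cx := hab (c • x) hcx (mul_smul a c x ▸ hacx)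
  have hcd_x : dist (b • f (c • x)) ((b * d) • f x) < ε := by
    rw [mul_smul, dist_smul]
    exact hcd x hx hcx
  calc dist (e • f x) ((b * d) • f x)
      ≤ dist (e • f x) (f ((a * c) • x)) + dist (f (a • c • x)) (b • f (c • x))
        + dist (b • f (c • x)) ((b * d) • f x) := mul_smul a c x ▸ dist_triangle4 _ _ _ _
    _ < ε + ε + ε := by rw [dist_comm]; gcongr
    _ = 3 * ε := by ring

end ApproxIntertwines

/-- An equivariant `ε`-approximation `(f, φ, ψ)` between `(Γ, X, x)` and `(Γ', X', f x)` at
scale `R`. -/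
structure IsEquivariantApprox (f : X → X') (φ : Γ → Γ') (ψ : Γ' → Γ) (x : X) (R ε : ℝ) :
    Prop where
  approxIsometryOn : ApproxIsometryOn f (closedBall x R) ε
  mapsTo_fwd : MapsTo φ (displacementBall Γ x R) (displacementBall Γ' (f x) R)
  approx_fwd : ∀ g ∈ displacementBall Γ x R, ApproxIntertwines f x R ε g (φ g)
  mapsTo_bwd : MapsTo ψ (displacementBall Γ' (f x) R) (displacementBall Γ x R)
  approx_bwd : ∀ g' ∈ displacementBall Γ' (f x) R, ApproxIntertwines f x R ε (ψ g') g'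

namespace IsEquivariantApprox

variable {φ : Γ → Γ'} {ψ : Γ' → Γ} {r : ℝ}

theorem fwd_mem (h : IsEquivariantApprox f φ ψ x R ε) {g : Γ}
    (hg : g ∈ displacementBall Γ x r) (hr : r ≤ R) :
    φ g ∈ displacementBall Γ' (f x) (r + 2 * ε) := by
  have hgR := displacementBall_mono hr hg
  have := (abs_sub_lt_iff.mp ((h.approx_fwd g hgR).abs_dist_sub_lt h.approxIsometryOn hgR)).1
  rw [mem_displacementBall] at hg ⊢
  linarith

theorem bwd_mem (h : IsEquivariantApprox f φ ψ x R ε) {g' : Γ'}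
    (hg' : g' ∈ displacementBall Γ' (f x) r) (hr : r ≤ R) :
    ψ g' ∈ displacementBall Γ x (r + 2 * ε) := by
  have hg'R := displacementBall_mono hr hg'
  have := (abs_sub_lt_iff.mp ((h.approx_bwd g' hg'R).abs_dist_sub_lt h.approxIsometryOn
    (h.mapsTo_bwd hg'R))).2
  rw [mem_displacementBall] at hg' ⊢
  linarith

theorem fwd_mul [IsIsometricSMul Γ' X'] (h : IsEquivariantApprox f φ ψ x R ε)
    (hsys' : ∀ g' : Γ', g' ≠ 1 → 3 * ε ≤ dist (f x) (g' • f x)) {a b : Γ}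
    (ha : a ∈ displacementBall Γ x R) (hb : b ∈ displacementBall Γ x R)
    (hab : a * b ∈ displacementBall Γ x R) : φ (a * b) = φ a * φ b :=
  (h.approx_fwd a ha).mul hsys' (h.approx_fwd b hb) (h.approx_fwd _ hab) hb hab

theorem bwd_fwd [IsIsometricSMul Γ X] (h : IsEquivariantApprox f φ ψ x R ε)
    (hsys : ∀ g : Γ, g ≠ 1 → 3 * ε ≤ dist x (g • x)) {g : Γ}
    (hg : g ∈ displacementBall Γ x R) : ψ (φ g) = g :=
  (h.approx_bwd _ (h.mapsTo_fwd hg)).left_unique h.approxIsometryOn hsys (h.approx_fwd g hg)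
    (h.mapsTo_bwd (h.mapsTo_fwd hg)) hg

theorem fwd_bwd [IsIsometricSMul Γ' X'] (h : IsEquivariantApprox f φ ψ x R ε)
    (hsys' : ∀ g' : Γ', g' ≠ 1 → 3 * ε ≤ dist (f x) (g' • f x)) {g' : Γ'}
    (hg' : g' ∈ displacementBall Γ' (f x) R) : φ (ψ g') = g' :=
  (h.approx_fwd _ (h.mapsTo_bwd hg')).right_unique hsys' (h.approx_bwd g' hg')
    (h.mapsTo_bwd hg')

/-- Multiplicativity of `ψ` is transported from that of `φ`, which needs `ψ a * ψ b` to stay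
in the range `R` where `φ` is multiplicative and `ψ ∘ φ = id`. -/
theorem bwd_mul [IsIsometricSMul Γ X] [IsIsometricSMul Γ' X']
    (h : IsEquivariantApprox f φ ψ x R ε) (hsys : ∀ g : Γ, g ≠ 1 → 3 * ε ≤ dist x (g • x))
    (hsys' : ∀ g' : Γ', g' ≠ 1 → 3 * ε ≤ dist (f x) (g' • f x)) (hε : 0 ≤ ε)
    (hr : 2 * (r + 2 * ε) ≤ R) {a b : Γ'} (ha : a ∈ displacementBall Γ' (f x) r)
    (hb : b ∈ displacementBall Γ' (f x) r) : ψ (a * b) = ψ a * ψ b := by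
  have hrR : r ≤ R := by linarith [dist_nonneg.trans ha]
  have hprod : ψ a * ψ b ∈ displacementBall Γ x R :=
    displacementBall_mono (by linarith) (mul_mem_displacementBall (h.bwd_mem ha hrR)
      (h.bwd_mem hb hrR))
  calc ψ (a * b) = ψ (φ (ψ a * ψ b)) := by
        rw [h.fwd_mul hsys' (h.mapsTo_bwd (displacementBall_mono hrR ha))
          (h.mapsTo_bwd (displacementBall_mono hrR hb)) hprod,
          h.fwd_bwd hsys' (displacementBall_mono hrR ha),
          h.fwd_bwd hsys' (displacementBall_mono hrR hb)]
    _ = ψ a * ψ b := h.bwd_fwd hsys hprod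

theorem bwd_comp_fwd_eq_id [IsIsometricSMul Γ X] (h : IsEquivariantApprox f φ ψ x R ε)
    (hsys : ∀ g : Γ, g ≠ 1 → 3 * ε ≤ dist x (g • x)) (hrR : r ≤ R)
    (hgen : closure (displacementBall Γ x r) = ⊤) {Φ : Γ →* Γ'} {Ψ : Γ' →* Γ}
    (hΦ : ∀ s ∈ displacementBall Γ x r, Φ s = φ s)
    (hΨ : ∀ s' ∈ displacementBall Γ' (f x) (r + 2 * ε), Ψ s' = ψ s') :
    Ψ.comp Φ = MonoidHom.id Γ :=
  MonoidHom.eq_of_eqOn_dense hgen fun s hs ↦ by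
    simp [hΦ s hs, hΨ _ (h.fwd_mem hs hrR), h.bwd_fwd hsys (displacementBall_mono hrR hs)]

theorem fwd_comp_bwd_eq_id [IsIsometricSMul Γ' X'] (h : IsEquivariantApprox f φ ψ x R ε)
    (hsys' : ∀ g' : Γ', g' ≠ 1 → 3 * ε ≤ dist (f x) (g' • f x)) (hrR : r ≤ R)
    (hgen' : closure (displacementBall Γ' (f x) r) = ⊤) {Φ : Γ →* Γ'} {Ψ : Γ' →* Γ}
    (hΦ : ∀ s ∈ displacementBall Γ x (r + 2 * ε), Φ s = φ s)
    (hΨ : ∀ s' ∈ displacementBall Γ' (f x) r, Ψ s' = ψ s') :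
    Φ.comp Ψ = MonoidHom.id Γ' :=
  MonoidHom.eq_of_eqOn_dense hgen' fun s' hs' ↦ by
    simp [hΨ s' hs', hΦ _ (h.bwd_mem hs' hrR), h.fwd_bwd hsys' (displacementBall_mono hrR hs')]

end IsEquivariantApprox

end Approximation

theorem stmt_11_general {X X' Γ Γ' : Type*} [MetricSpace X] [MetricSpace X']
    [Group Γ] [Group Γ'] [MulAction Γ X] [IsIsometricSMul Γ X]
    [MulAction Γ' X'] [IsIsometricSMul Γ' X']
    (x : X) (x' : X') (s₀ : ℝ)
    (hsys : ∀ g : Γ, g ≠ 1 → s₀ ≤ dist x (g • x))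
    (hsys' : ∀ g' : Γ', g' ≠ 1 → s₀ ≤ dist x' (g' • x'))
    (ε : ℝ) (hε : 0 < ε) (hεs₀ : 3 * ε ≤ s₀)
    (L : ℝ) (hL : 0 < L) (R : ℝ) (hLR : 3 * L ≤ R)
    (f : X → X') (φ : Γ → Γ') (ψ : Γ' → Γ)
    (hfx : f x = x')
    (hf : ∀ y₁ ∈ Metric.closedBall x R, ∀ y₂ ∈ Metric.closedBall x R,
      |dist (f y₁) (f y₂) - dist y₁ y₂| < ε)
    (hφmem : Set.MapsTo φ {g : Γ | dist x (g • x) ≤ R} {g' : Γ' | dist x' (g' • x') ≤ R})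
    (hφ : ∀ g ∈ {g : Γ | dist x (g • x) ≤ R}, ∀ y ∈ Metric.closedBall x R,
      g • y ∈ Metric.closedBall x R → dist (f (g • y)) (φ g • f y) < ε)
    (hψmem : Set.MapsTo ψ {g' : Γ' | dist x' (g' • x') ≤ R} {g : Γ | dist x (g • x) ≤ R})
    (hψ : ∀ g' ∈ {g' : Γ' | dist x' (g' • x') ≤ R}, ∀ y ∈ Metric.closedBall x R,
      ψ g' • y ∈ Metric.closedBall x R → dist (f (ψ g' • y)) (g' • f y) < ε)
    (hgen : Subgroup.closure {g : Γ | dist x (g • x) ≤ L - 2 * ε} = ⊤)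
    (hgen' : Subgroup.closure {g' : Γ' | dist x' (g' • x') ≤ L - 2 * ε} = ⊤)
    (hpres : ∃ W : Set (FreeGroup {g : Γ // dist x (g • x) ≤ L}),
      (∀ w ∈ W, ∃ s₁ s₂ s₃ : {g : Γ // dist x (g • x) ≤ L},
        w = FreeGroup.of s₁ * FreeGroup.of s₂ * FreeGroup.of s₃) ∧
      (FreeGroup.lift (fun s : {g : Γ // dist x (g • x) ≤ L} => (s : Γ))).ker =
        Subgroup.normalClosure W)
    (hpres' : ∃ W' : Set (FreeGroup {g' : Γ' // dist x' (g' • x') ≤ L}),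
      (∀ w ∈ W', ∃ s₁ s₂ s₃ : {g' : Γ' // dist x' (g' • x') ≤ L},
        w = FreeGroup.of s₁ * FreeGroup.of s₂ * FreeGroup.of s₃) ∧
      (FreeGroup.lift (fun s : {g' : Γ' // dist x' (g' • x') ≤ L} => (s : Γ'))).ker =
        Subgroup.normalClosure W') :
    ∃ e : Γ ≃* Γ', (∀ s ∈ {g : Γ | dist x (g • x) ≤ L}, e s = φ s) ∧
      (∀ s' ∈ {g' : Γ' | dist x' (g' • x') ≤ L}, e.symm s' = ψ s') := by
  subst hfx
  by_cases hs₀L : s₀ ≤ L - 2 * ε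
  swap
  · have := subsingleton_of_closure_displacementBall_eq_top hsys hgen (not_le.mp hs₀L)
    have := subsingleton_of_closure_displacementBall_eq_top hsys' hgen' (not_le.mp hs₀L)
    exact ⟨(1 : Γ →* Γ').toMulEquiv 1 (Subsingleton.elim _ _) (Subsingleton.elim _ _),
      fun _ _ ↦ Subsingleton.elim _ _, fun _ _ ↦ Subsingleton.elim _ _⟩
  obtain ⟨W, hW, hker⟩ := hpres
  obtain ⟨W', hW', hker'⟩ := hpres'
  have h : IsEquivariantApprox f φ ψ x R ε := ⟨hf, hφmem, hφ, hψmem, hψ⟩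
  have hsys₃ (g : Γ) (hg : g ≠ 1) : 3 * ε ≤ dist x (g • x) := hεs₀.trans (hsys g hg)
  have hsys₃' (g' : Γ') (hg' : g' ≠ 1) : 3 * ε ≤ dist (f x) (g' • f x) :=
    hεs₀.trans (hsys' g' hg')
  have hLR' : L ≤ R := by linarith
  have hsub : displacementBall Γ x (L - 2 * ε) ⊆ displacementBall Γ x L :=
    displacementBall_mono (by linarith)
  have hsub' : displacementBall Γ' (f x) (L - 2 * ε) ⊆ displacementBall Γ' (f x) L :=
    displacementBall_mono (by linarith)
  obtain ⟨Φ, hΦ⟩ := exists_monoidHom_eqOn_of_triangular_presentation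
    (top_le_iff.mp (hgen ▸ closure_mono hsub)) hW hker (displacementBall_mono hLR')
    (one_mem_displacementBall (by linarith)) (fun _ ↦ inv_mem_displacementBall)
    fun _ ha _ hb hab ↦ h.fwd_mul hsys₃' ha hb hab
  obtain ⟨Ψ, hΨ⟩ := exists_monoidHom_eqOn_of_triangular_presentation
    (top_le_iff.mp (hgen' ▸ closure_mono hsub')) hW' hker' subset_rfl
    (one_mem_displacementBall hL.le) (fun _ ↦ inv_mem_displacementBall)
    fun _ ha _ hb _ ↦ h.bwd_mul hsys₃ hsys₃' hε.le (by linarith) ha hb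
  have hrR : L - 2 * ε ≤ R := by linarith
  exact ⟨Φ.toMulEquiv Ψ
    (h.bwd_comp_fwd_eq_id hsys₃ hrR hgen (fun s hs ↦ hΦ s (hsub hs)) (by rwa [sub_add_cancel]))
    (h.fwd_comp_bwd_eq_id hsys₃' hrR hgen' (by rwa [sub_add_cancel])
      fun s' hs' ↦ hΨ s' (hsub' hs')), hΦ, hΨ⟩

/-- Under the systole bounds `sys ≥ s₀` at both basepoints, `3ε ≤ s₀`,
`3L ≤ 1/ε = R`, an equivariant `ε`-approximation `(f,φ,ψ)` between `(Γ,X,x)` and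
`(Γ',X',x')`, generation of `Γ` and `Γ'` by `Σ̄_{L-2ε}` at the basepoints, and
presentations of `Γ` and `Γ'` over `Σ̄_L` with relators which are words of length `3`,
the maps `φ` and `ψ` induce mutually inverse group isomorphisms `φ̃ : Γ → Γ'` and
`ψ̃ : Γ' → Γ` coinciding with `φ` and `ψ` on `Σ̄_L(Γ,x)` and `Σ̄_L(Γ',x')`. -/
theorem stmt_11 {X X' Γ Γ' : Type*} [MetricSpace X] [MetricSpace X']
    [Group Γ] [Group Γ'] [MulAction Γ X] [IsIsometricSMul Γ X]
    [MulAction Γ' X'] [IsIsometricSMul Γ' X']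
    (x : X) (x' : X') (s₀ : ℝ) (hs₀ : 0 < s₀)
    (hsys : ∀ g : Γ, g ≠ 1 → s₀ ≤ dist x (g • x))
    (hsys' : ∀ g' : Γ', g' ≠ 1 → s₀ ≤ dist x' (g' • x'))
    (ε : ℝ) (hε : 0 < ε) (hεs₀ : 3 * ε ≤ s₀)
    (L : ℝ) (hL : 0 < L) (R : ℝ) (hR : R = 1 / ε) (hLR : 3 * L ≤ R)
    (f : X → X') (φ : Γ → Γ') (ψ : Γ' → Γ)
    (hfx : f x = x')
    (hf : ∀ y₁ ∈ Metric.closedBall x R, ∀ y₂ ∈ Metric.closedBall x R,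
      |dist (f y₁) (f y₂) - dist y₁ y₂| < ε)
    (hφmem : Set.MapsTo φ {g : Γ | dist x (g • x) ≤ R} {g' : Γ' | dist x' (g' • x') ≤ R})
    (hφ : ∀ g ∈ {g : Γ | dist x (g • x) ≤ R}, ∀ y ∈ Metric.closedBall x R,
      g • y ∈ Metric.closedBall x R → dist (f (g • y)) (φ g • f y) < ε)
    (hψmem : Set.MapsTo ψ {g' : Γ' | dist x' (g' • x') ≤ R} {g : Γ | dist x (g • x) ≤ R})
    (hψ : ∀ g' ∈ {g' : Γ' | dist x' (g' • x') ≤ R}, ∀ y ∈ Metric.closedBall x R,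
      ψ g' • y ∈ Metric.closedBall x R → dist (f (ψ g' • y)) (g' • f y) < ε)
    (hgen : Subgroup.closure {g : Γ | dist x (g • x) ≤ L - 2 * ε} = ⊤)
    (hgen' : Subgroup.closure {g' : Γ' | dist x' (g' • x') ≤ L - 2 * ε} = ⊤)
    (hpres : ∃ W : Set (FreeGroup {g : Γ // dist x (g • x) ≤ L}),
      (∀ w ∈ W, ∃ s₁ s₂ s₃ : {g : Γ // dist x (g • x) ≤ L},
        w = FreeGroup.of s₁ * FreeGroup.of s₂ * FreeGroup.of s₃) ∧
      (FreeGroup.lift (fun s : {g : Γ // dist x (g • x) ≤ L} => (s : Γ))).ker =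
        Subgroup.normalClosure W)
    (hpres' : ∃ W' : Set (FreeGroup {g' : Γ' // dist x' (g' • x') ≤ L}),
      (∀ w ∈ W', ∃ s₁ s₂ s₃ : {g' : Γ' // dist x' (g' • x') ≤ L},
        w = FreeGroup.of s₁ * FreeGroup.of s₂ * FreeGroup.of s₃) ∧
      (FreeGroup.lift (fun s : {g' : Γ' // dist x' (g' • x') ≤ L} => (s : Γ'))).ker =
        Subgroup.normalClosure W') :
    ∃ e : Γ ≃* Γ', (∀ s ∈ {g : Γ | dist x (g • x) ≤ L}, e s = φ s) ∧
      (∀ s' ∈ {g' : Γ' | dist x' (g' • x') ≤ L}, e.symm s' = ψ s') :=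
  stmt_11_general x x' s₀ hsys hsys' ε hε hεs₀ L hL R hLR f φ ψ hfx hf hφmem hφ hψmem hψ hgen hgen'
    hpres hpres'
end
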